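/- arXiv:1803.10920 — 7 statements merged into one kernel-verified Lean document; each statement's English description precedes it below -/
import Mathlib

section
/- Let m and n be positive integers and let a, b be integers with a ≥ b. If a − b ≥ m + n − gcd(m, n), then there exist an integer c with b ≤ c ≤ a and a nonempty finite list L of integers, each entry of which equals m or −n, such that the total sum of L is 0 and every prefix sum p of L satisfies b ≤ c + p ≤ a. (In other words, the step set {(0, m), (0, −n)} admits a loop inside the strip b ≤ y ≤ a whenever the width a − b is at least m + n − gcd(m, n).) -/
private lemma telesum (f : ℕ → ℤ) : ∀ j : ℕ,
    ((List.range j).map (fun k => f (k+1) - f k)).sum = f j - f 0 := by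
  intro j
  induction j with
  | zero => simp
  | succ j ih => rw [List.range_succ, List.map_append, List.sum_append, ih]; simp

/-- If the width of the strip `[b, a]` is at least `m + n - gcd(m, n)`, then the
vertical step set `{m, -n}` admits a loop inside the strip: a nonempty list of
steps, each equal to `m` or `-n`, starting at some altitude `c ∈ [b, a]`,
staying in `[b, a]` at every prefix, with total sum `0`. -/
theorem strip_loop_exists (m n : ℕ) (hm : 0 < m) (hn : 0 < n)
    (a b : ℤ) (hab : b ≤ a)
    (hwidth : (m : ℤ) + (n : ℤ) - (Nat.gcd m n : ℤ) ≤ a - b) :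
    ∃ c : ℤ, b ≤ c ∧ c ≤ a ∧
      ∃ L : List ℤ, L ≠ [] ∧
        (∀ x ∈ L, x = (m : ℤ) ∨ x = -(n : ℤ)) ∧
        L.sum = 0 ∧
        (∀ i : ℕ, b ≤ c + (L.take i).sum ∧ c + (L.take i).sum ≤ a) := by
  set g := Nat.gcd m n with hg
  have hgm : g ∣ m := Nat.gcd_dvd_left m n
  have hgn : g ∣ n := Nat.gcd_dvd_right m n
  have hgpos : 0 < g := Nat.gcd_pos_of_pos_left n hm
  have hgs : g ∣ (m + n) := Dvd.dvd.add hgm hgn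
  set K : ℕ := (m + n) / g with hK
  have hKpos : 0 < K := Nat.div_pos (le_trans (Nat.le_of_dvd (by omega) hgm) (by omega)) hgpos
  set M : ℤ := (m : ℤ)
  set N : ℤ := (n : ℤ)
  set S : ℤ := M + N
  set G : ℤ := (g : ℤ)
  have hSpos : 0 < S := by positivity
  have hGpos : 0 < G := Int.natCast_pos.mpr hgpos
  have hGM : G ∣ M := Int.natCast_dvd_natCast.mpr hgm
  have hGS : G ∣ S := by
    have h := Int.natCast_dvd_natCast.mpr hgs
    push_cast at h
    exact h
  set f : ℕ → ℤ := fun k => ((k : ℤ) * M) % S with hf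
  have hf0 : f 0 = 0 := by simp [hf]
  have hfnonneg : ∀ k, 0 ≤ f k := fun k => Int.emod_nonneg _ (ne_of_gt hSpos)
  have hflt : ∀ k, f k < S := fun k => Int.emod_lt_of_pos _ hSpos
  have hfdvd : ∀ k, G ∣ f k := by
    intro k
    rw [hf]
    simp only
    rw [Int.emod_def]
    exact dvd_sub (Dvd.dvd.mul_left hGM _) (Dvd.dvd.mul_right hGS _)
  have hfbound : ∀ k, f k ≤ S - G := by
    intro k
    have h1 : G ∣ S - f k := dvd_sub hGS (hfdvd k)
    have h2 : 0 < S - f k := by linarith [hflt k]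
    have := Int.le_of_dvd h2 h1
    linarith
  have hNpos : 0 < N := Int.natCast_pos.mpr hn
  have hMS : M < S := by show M < M + N; linarith
  have hstep : ∀ k, f (k+1) - f k = M ∨ f (k+1) - f k = -N := by
    intro k
    have hMmod : M % S = M := Int.emod_eq_of_lt (by positivity) hMS
    have heq : f (k+1) = (f k + M) % S := by
      rw [hf]
      simp only
      push_cast
      rw [add_mul, one_mul, Int.add_emod, hMmod]
    by_cases h : f k + M < S
    · left
      rw [heq, Int.emod_eq_of_lt (by linarith [hfnonneg k, hflt k]; ) h]
      ring
    · right
      push_neg at h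
      have : (f k + M) % S = f k + M - S := by
        have h2 : (f k + M - S) % S = (f k + M) % S := by
          rw [Int.sub_emod, Int.emod_self, sub_zero, Int.emod_emod_of_dvd _ dvd_rfl]
        rw [← h2]
        exact Int.emod_eq_of_lt (by linarith) (by linarith [hfbound k, hGpos, hMS])
      rw [heq, this]; simp [S]; ring
  have hfK : f K = 0 := by
    have hnat : (m + n) ∣ K * m := by
      obtain ⟨m', hm'⟩ := hgm
      obtain ⟨s, hs⟩ := hgs
      refine ⟨m', ?_⟩
      rw [hK, hs, hm', Nat.mul_div_cancel_left _ hgpos]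
      ring
    have hdvd : S ∣ (K : ℤ) * M := by
      obtain ⟨t, ht⟩ := hnat
      refine ⟨(t : ℤ), ?_⟩
      have hc := congrArg (fun x : ℕ => (x : ℤ)) ht
      push_cast at hc
      simpa [S, M] using hc
    rw [hf]
    simp only
    exact Int.emod_eq_zero_of_dvd hdvd
  refine ⟨b, le_refl b, hab, (List.range K).map (fun k => f (k+1) - f k), ?_, ?_, ?_, ?_⟩
  · have hKne : K ≠ 0 := hKpos.ne'
    simp [List.range_eq_nil, hKne]
  · intro x hx
    simp only [List.mem_map, List.mem_range] at hx
    obtain ⟨k, _, rfl⟩ := hx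
    exact hstep k
  · rw [telesum, hfK, hf0]; ring
  · intro i
    have htake : (((List.range K).map (fun k => f (k+1) - f k)).take i).sum
        = f (min i K) := by
      rw [← List.map_take, List.take_range, telesum, hf0, sub_zero]
    rw [htake]
    constructor
    · linarith [hfnonneg (min i K)]
    · have := hfbound (min i K)
      have hw : S - G ≤ a - b := hwidth
      linarith
end

section
/- Let F(t) ∈ ℤ⟦t⟧ be the power series whose coefficient of t^n is the number of lists of n integers, each belonging to {±2, ±3, ±4, ±5, ±6, ±7, ±8}, all of whose prefix sums lie in the interval [−8, 8]. Then F(t)·(1 − 4t − 59t² − 77t³ + 170t⁴ + 234t⁵ − 92t⁶ − 142t⁷ − 4t⁸ + 6t⁹) = 1 + 10t + 13t² − 37t³ − 40t⁴ + 28t⁵ + 26t⁶ − 2t⁷ as an identity in ℤ⟦t⟧. -/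
open PowerSeries

/-- The generating function for close football games: the coefficient of `t^n`
is the number of lists of `n` integers, each with absolute value in `[2, 8]`,
all of whose prefix sums lie in `[-8, 8]`. -/
noncomputable def closeGameGF : PowerSeries ℤ :=
  PowerSeries.mk fun n =>
    (Nat.card {l : List ℤ //
      l.length = n ∧
      (∀ x ∈ l, 2 ≤ |x| ∧ |x| ≤ 8) ∧
      (∀ i : ℕ, -8 ≤ (l.take i).sum ∧ (l.take i).sum ≤ 8)} : ℤ)


/-!
Counting walks by their starting margin `s`, the number of admissible walks of length `n` is
`(T ^ n) 𝟙_S s` for the transfer operator `(T f) s = [s ∈ S] * ∑ d ∈ D, f (s + d)`.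
The denominator read backwards is a polynomial `q` with `q(T) 𝟙_S = 0` (a finite check on the
17 margins), so the counts satisfy the recurrence encoded by the denominator, and `F` times the
denominator is a polynomial of degree less than 9, read off from the first nine counts.
-/

open Finset hiding mk

section ConfinedWalks

variable {G : Type*} [AddMonoid G] (D : Finset G) (S : Set G)

def confinedWalks (s : G) (n : ℕ) : Set (List G) :=
  {l | l.length = n ∧ (∀ x ∈ l, x ∈ D) ∧ ∀ i, s + (l.take i).sum ∈ S}

variable {D S}

theorem confinedWalks_eq_empty {s : G} (hs : s ∉ S) (n : ℕ) : confinedWalks D S s n = ∅ :=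
  Set.eq_empty_of_forall_notMem fun _ hl => hs (by simpa using hl.2.2 0)

theorem confinedWalks_zero {s : G} (hs : s ∈ S) : confinedWalks D S s 0 = {[]} := by
  ext l
  constructor
  · exact fun hl => List.eq_nil_of_length_eq_zero hl.1
  · rintro rfl
    exact ⟨rfl, by simp, by simpa using hs⟩

def confinedWalksSuccEquiv {s : G} (hs : s ∈ S) (n : ℕ) :
    confinedWalks D S s (n + 1) ≃ Σ d : D, confinedWalks D S (s + d) n where
  toFun
    | ⟨d :: l, hlen, hD, hS⟩ =>
      ⟨⟨d, hD d List.mem_cons_self⟩, l, by simpa using hlen,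
        fun x hx => hD x (List.mem_cons_of_mem d hx),
        fun i => by simpa [add_assoc] using hS (i + 1)⟩
  invFun
    | ⟨d, l, hlen, hD, hS⟩ =>
      ⟨d :: l, by simp [hlen], List.forall_mem_cons.2 ⟨d.2, hD⟩, fun
        | 0 => by simpa using hs
        | i + 1 => by simpa [add_assoc] using hS i⟩
  left_inv
    | ⟨_ :: _, _, _, _⟩ => rfl
  right_inv
    | ⟨_, _, _, _, _⟩ => rfl

instance finite_confinedWalks (s : G) (n : ℕ) : Finite (confinedWalks D S s n) := by
  induction n generalizing s with
  | zero =>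
    by_cases hs : s ∈ S
    · rw [confinedWalks_zero hs]; infer_instance
    · rw [confinedWalks_eq_empty hs]; infer_instance
  | succ n ih =>
    by_cases hs : s ∈ S
    · exact Finite.of_equiv _ (confinedWalksSuccEquiv hs n).symm
    · rw [confinedWalks_eq_empty hs]; infer_instance

variable (D S) [DecidablePred (· ∈ S)]

/-- A computable `S.indicator 1`. -/
def confinedIndicator : G → ℤ := fun s => if s ∈ S then 1 else 0

def confinedTransfer : Module.End ℤ (G → ℤ) where
  toFun f s := if s ∈ S then ∑ d ∈ D, f (s + d) else 0
  map_add' f g := by ext s; by_cases hs : s ∈ S <;> simp [hs, sum_add_distrib]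
  map_smul' c f := by ext s; by_cases hs : s ∈ S <;> simp [hs, mul_sum]

variable {D S}

theorem confinedTransfer_apply (f : G → ℤ) (s : G) :
    confinedTransfer D S f s = if s ∈ S then ∑ d ∈ D, f (s + d) else 0 :=
  rfl

theorem card_confinedWalks (s : G) (n : ℕ) :
    (Nat.card (confinedWalks D S s n) : ℤ) = (confinedTransfer D S ^ n) (confinedIndicator S) s := by
  induction n generalizing s with
  | zero =>
    by_cases hs : s ∈ S <;> simp [hs, confinedWalks_zero, confinedWalks_eq_empty, confinedIndicator]
  | succ n ih =>
    rw [pow_succ', Module.End.mul_apply]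
    by_cases hs : s ∈ S
    · rw [Nat.card_congr (confinedWalksSuccEquiv hs n), Nat.card_sigma, confinedTransfer_apply,
        if_pos hs, Nat.cast_sum, sum_coe_sort D fun d => (Nat.card (confinedWalks D S (s + d) n) : ℤ)]
      simp only [ih]
    · simp [confinedWalks_eq_empty hs, confinedTransfer_apply, hs]

theorem confinedTransfer_pow_apply_of_notMem {s : G} (hs : s ∉ S) (n : ℕ) :
    (confinedTransfer D S ^ n) (confinedIndicator S) s = 0 := by
  rw [← card_confinedWalks, confinedWalks_eq_empty hs]
  simp

end ConfinedWalks

theorem coeff_mk_mul_mk_eq_zero_of_annihilates {R M : Type*} [CommSemiring R] [AddCommMonoid M]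
    [Module R M] (T : Module.End R M) (v : M) (φ : M →ₗ[R] R) {p : ℕ → R} {d : ℕ}
    (hp : ∀ j, d < j → p j = 0) (hv : ∑ j ∈ range (d + 1), p j • (T ^ (d - j)) v = 0)
    {n : ℕ} (hn : d ≤ n) :
    coeff n (mk (fun k => φ ((T ^ k) v)) * mk p) = 0 := by
  have hshift : ∑ j ∈ range (d + 1), p j * φ ((T ^ (n - j)) v) = 0 := by
    have := congr_arg (φ ∘ (T ^ (n - d))) hv
    simp only [Function.comp_apply, map_sum, map_smul, map_zero, ← Module.End.mul_apply,
      ← pow_add, smul_eq_mul] at this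
    rw [← this]
    refine sum_congr rfl fun j hj => ?_
    rw [show n - d + (d - j) = n - j by rw [mem_range] at hj; omega]
  rw [mul_comm, coeff_mul, Nat.sum_antidiagonal_eq_sum_range_succ_mk, ← hshift]
  simp only [coeff_mk]
  refine (sum_subset (range_subset_range.2 (by omega)) fun j _ hj => ?_).symm
  rw [hp j (by simpa using hj), zero_mul]

/-- Iterating `tabulate lo hi ∘ T` instead of `T` memoises the iterates, so that `decide` evaluates
`T ^ n` in time linear in `n` rather than exponential. -/
def tabulate (lo hi : ℤ) (f : ℤ → ℤ) (s : ℤ) : ℤ :=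
  if lo ≤ s ∧ s ≤ hi then
    (((List.range (hi - lo + 1).toNat).map fun i : ℕ => f (lo + i)).getD (s - lo).toNat 0)
  else 0

theorem tabulate_eq_self {lo hi : ℤ} {f : ℤ → ℤ} (hf : ∀ s, ¬(lo ≤ s ∧ s ≤ hi) → f s = 0) :
    tabulate lo hi f = f := by
  ext s
  by_cases hs : lo ≤ s ∧ s ≤ hi
  · have hlt : (s - lo).toNat < (hi - lo + 1).toNat := by omega
    simp [tabulate, hs, List.getD_eq_getElem?_getD, hlt]
  · simp [tabulate, hs, hf s hs]

def scoringSwings : Finset ℤ := {-8, -7, -6, -5, -4, -3, -2, 2, 3, 4, 5, 6, 7, 8}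

theorem mem_scoringSwings {x : ℤ} : x ∈ scoringSwings ↔ 2 ≤ |x| ∧ |x| ≤ 8 := by
  simp only [scoringSwings, mem_insert, mem_singleton, le_abs, abs_le]
  omega

abbrev closeMargins : Set ℤ := {s | -8 ≤ s ∧ s ≤ 8}

abbrev closeGameTransfer : Module.End ℤ (ℤ → ℤ) := confinedTransfer scoringSwings closeMargins

theorem closeGameGF_eq_mk : closeGameGF =
    mk fun n => (LinearMap.proj 0 : (ℤ → ℤ) →ₗ[ℤ] ℤ)
      ((closeGameTransfer ^ n) (confinedIndicator closeMargins)) := by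
  ext n
  rw [closeGameGF, coeff_mk, coeff_mk, LinearMap.proj_apply, ← card_confinedWalks]
  congr 1
  refine Nat.card_congr (Equiv.subtypeEquivRight fun l => ?_)
  simp [confinedWalks, mem_scoringSwings]

theorem closeGameTransfer_pow_apply (n : ℕ) (f : ℤ → ℤ) :
    (closeGameTransfer ^ n) f = (tabulate (-8) 8 ∘ closeGameTransfer)^[n] f := by
  have : tabulate (-8) 8 ∘ closeGameTransfer = closeGameTransfer :=
    funext fun g => tabulate_eq_self fun s hs => by simp [confinedTransfer_apply, hs]
  rw [this, Module.End.pow_apply]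

def closeGameDenom : ℕ → ℤ
  | 0 => 1 | 1 => -4 | 2 => -59 | 3 => -77 | 4 => 170 | 5 => 234 | 6 => -92 | 7 => -142
  | 8 => -4 | 9 => 6 | _ => 0

def closeGameNumer : ℕ → ℤ
  | 0 => 1 | 1 => 10 | 2 => 13 | 3 => -37 | 4 => -40 | 5 => 28 | 6 => 26 | 7 => -2 | _ => 0

theorem closeGameDenom_eq_zero {j : ℕ} (hj : 9 < j) : closeGameDenom j = 0 := by
  obtain ⟨k, rfl⟩ : ∃ k, j = k + 10 := ⟨j - 10, by omega⟩
  rfl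

theorem closeGameNumer_eq_zero {j : ℕ} (hj : 8 ≤ j) : closeGameNumer j = 0 := by
  obtain ⟨k, rfl⟩ : ∃ k, j = k + 8 := ⟨j - 8, by omega⟩
  rfl

theorem mk_closeGameDenom : mk closeGameDenom = 1 - 4 * X - 59 * X ^ 2 - 77 * X ^ 3
    + 170 * X ^ 4 + 234 * X ^ 5 - 92 * X ^ 6 - 142 * X ^ 7 - 4 * X ^ 8 + 6 * X ^ 9 := by
  ext k
  simp only [coeff_mk, map_sub, map_add, ← map_ofNat C, coeff_C_mul, coeff_X_pow, coeff_one, coeff_X]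
  rcases k with _ | _ | _ | _ | _ | _ | _ | _ | _ | _ | k <;> simp [closeGameDenom]

theorem mk_closeGameNumer : mk closeGameNumer = 1 + 10 * X + 13 * X ^ 2 - 37 * X ^ 3
    - 40 * X ^ 4 + 28 * X ^ 5 + 26 * X ^ 6 - 2 * X ^ 7 := by
  ext k
  simp only [coeff_mk, map_sub, map_add, ← map_ofNat C, coeff_C_mul, coeff_X_pow, coeff_one, coeff_X]
  rcases k with _ | _ | _ | _ | _ | _ | _ | _ | k <;> simp [closeGameNumer]

set_option maxRecDepth 10000 in
theorem closeGameDenom_reverse_annihilates : ∑ j ∈ range 10,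
    closeGameDenom j • (closeGameTransfer ^ (9 - j)) (confinedIndicator closeMargins) = 0 := by
  ext s
  by_cases hs : s ∈ closeMargins
  · have : ∀ s ∈ Icc (-8 : ℤ) 8, ∑ j ∈ range 10, closeGameDenom j *
        (tabulate (-8) 8 ∘ closeGameTransfer)^[9 - j] (confinedIndicator closeMargins) s = 0 := by
      decide
    simpa [closeGameTransfer_pow_apply] using this s (by simpa using hs)
  · simp [confinedTransfer_pow_apply_of_notMem hs]

theorem closeGame_initial_coeffs : ∀ n < 9, ∑ x ∈ antidiagonal n,
    (tabulate (-8) 8 ∘ closeGameTransfer)^[x.1] (confinedIndicator closeMargins) 0 *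
      closeGameDenom x.2 = closeGameNumer n := by
  decide

theorem closeGame_gf :
    closeGameGF *
      (1 - 4 * X - 59 * X ^ 2 - 77 * X ^ 3 + 170 * X ^ 4 + 234 * X ^ 5
        - 92 * X ^ 6 - 142 * X ^ 7 - 4 * X ^ 8 + 6 * X ^ 9)
      = 1 + 10 * X + 13 * X ^ 2 - 37 * X ^ 3 - 40 * X ^ 4 + 28 * X ^ 5
        + 26 * X ^ 6 - 2 * X ^ 7 := by
  rw [closeGameGF_eq_mk, ← mk_closeGameDenom, ← mk_closeGameNumer]
  ext n
  rcases lt_or_ge n 9 with hn | hn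
  · simpa [coeff_mul, closeGameTransfer_pow_apply] using closeGame_initial_coeffs n hn
  · rw [coeff_mk_mul_mk_eq_zero_of_annihilates _ _ _ (fun _ => closeGameDenom_eq_zero)
      closeGameDenom_reverse_annihilates hn, coeff_mk, closeGameNumer_eq_zero (by omega)]
end

section
/- Let F(t) ∈ ℤ⟦t⟧ be the power series whose coefficient of t^n is the number of lists of n integers, each belonging to {−2, −1, 0, 1, 2}, all of whose prefix sums are ≥ 0 and whose total sum is 0 (nonnegative excursions). Then t⁴F⁴ − t²(t + 1)F³ + t(t + 2)F² − (t + 1)F + 1 = 0 in ℤ⟦t⟧. -/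
open PowerSeries

/-- The generating function for nonnegative excursions with step set
`{-2, -1, 0, 1, 2}`: the coefficient of `t^n` is the number of lists of `n`
integers from that set, all of whose prefix sums are `≥ 0`, with total sum `0`. -/
noncomputable def excursionGF : PowerSeries ℤ :=
  PowerSeries.mk fun n =>
    (Nat.card {l : List ℤ //
      l.length = n ∧
      (∀ x ∈ l, x ∈ ({-2, -1, 0, 1, 2} : Set ℤ)) ∧
      (∀ i : ℕ, 0 ≤ (l.take i).sum) ∧
      l.sum = 0} : ℤ)

/-!
Let `W k` be the generating function of nonnegative walks ending at height `k` (and `W k = 0`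
for `k < 0`). Removing the last step gives `W k = [k = 0] + t (W (k+2) + ⋯ + W (k-2))`, and this
system has only one solution in `ℤ⟦t⟧`, because its right-hand side raises the `t`-adic order of
differences. Kernel method: if `F, g` solve `F = 1 + t F (1 + g + g² + t F)` and
`g = t (1 + g + g² + t F + g³ + 2 t F g)` (such a pair exists by the same contraction argument),
then `q k * F`, where `∑ q k uᵏ = 1 / (1 - g u - t F u²)`, solves the walk system. Hence `F` is
the excursion series, and eliminating `g` from the two equations yields the quartic.
-/

namespace PowerSeries

variable {R ι : Type*} [CommRing R]

theorem coeff_eq_of_X_pow_succ_dvd_sub {n : ℕ} {a b : R⟦X⟧} (h : X ^ (n + 1) ∣ a - b) :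
    coeff n a = coeff n b := by
  rw [← sub_eq_zero, ← map_sub]
  exact X_pow_dvd_iff.1 h n n.lt_succ_self

def IsXAdicContraction (Φ : (ι → R⟦X⟧) → ι → R⟦X⟧) : Prop :=
  ∀ (n : ℕ) (f g : ι → R⟦X⟧), (∀ i, X ^ n ∣ f i - g i) → ∀ i, X ^ (n + 1) ∣ Φ f i - Φ g i

namespace IsXAdicContraction

variable {Φ : (ι → R⟦X⟧) → ι → R⟦X⟧} (hΦ : IsXAdicContraction Φ)
include hΦ

theorem X_pow_dvd_iterate_sub {N M : ℕ} (hNM : N ≤ M) (i : ι) :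
    X ^ N ∣ Φ^[M] 0 i - Φ^[N] 0 i := by
  induction N generalizing M i with
  | zero => simp
  | succ N ih =>
    obtain ⟨M, rfl⟩ : ∃ M', M = M' + 1 := ⟨M - 1, by omega⟩
    rw [Function.iterate_succ_apply', Function.iterate_succ_apply']
    exact hΦ N _ _ (fun j => ih (by omega) j) i

theorem exists_isFixedPt : ∃ f, Function.IsFixedPt Φ f := by
  let f : ι → R⟦X⟧ := fun i => mk fun n => coeff n (Φ^[n + 1] 0 i)
  have hf : ∀ N i, X ^ N ∣ f i - Φ^[N] 0 i := fun N i => X_pow_dvd_iff.2 fun m hm => by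
    rw [map_sub, coeff_mk, sub_eq_zero]
    exact (coeff_eq_of_X_pow_succ_dvd_sub (hΦ.X_pow_dvd_iterate_sub hm i)).symm
  refine ⟨f, funext fun i => ext fun n => ?_⟩
  rw [coeff_eq_of_X_pow_succ_dvd_sub (hΦ n _ _ (hf n) i), ← Function.iterate_succ_apply' Φ]
  simp [f]

theorem eq_of_isFixedPt {f g : ι → R⟦X⟧} (hf : Function.IsFixedPt Φ f)
    (hg : Function.IsFixedPt Φ g) : f = g := by
  have key : ∀ n i, X ^ n ∣ f i - g i := by
    intro n
    induction n with
    | zero => simp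
    | succ n ih => simpa only [hf.eq, hg.eq] using hΦ n f g ih
  exact funext fun i => ext fun n => coeff_eq_of_X_pow_succ_dvd_sub (key (n + 1) i)

end IsXAdicContraction

theorem X_pow_succ_dvd_X_mul_sub {n : ℕ} {a b : R⟦X⟧}
    (h : Ideal.Quotient.mk (Ideal.span {X ^ n}) a = Ideal.Quotient.mk _ b) :
    X ^ (n + 1) ∣ X * a - X * b := by
  rw [← mul_sub, pow_succ']
  exact mul_dvd_mul_left X (Ideal.mem_span_singleton.1 (Ideal.Quotient.eq.1 h))

end PowerSeries

def nonnegWalks (S : Finset ℤ) (n : ℕ) (k : ℤ) : Set (List ℤ) :=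
  {l | l.length = n ∧ (∀ x ∈ l, x ∈ S) ∧ (∀ i : ℕ, 0 ≤ (l.take i).sum) ∧ l.sum = k}

section NonnegWalks

variable (S : Finset ℤ)

theorem nonnegWalks_eq_empty_of_neg (n : ℕ) {k : ℤ} (hk : k < 0) : nonnegWalks S n k = ∅ :=
  Set.eq_empty_of_forall_notMem fun l ⟨_, _, hpre, hsum⟩ => by
    have := hpre l.length
    rw [List.take_length, hsum] at this
    omega

theorem nonnegWalks_zero (k : ℤ) : nonnegWalks S 0 k = if k = 0 then {[]} else ∅ := by
  split_ifs with hk <;> ext l <;>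
    simp +contextual [nonnegWalks, List.length_eq_zero_iff, hk, eq_comm]

theorem append_singleton_mem_nonnegWalks_iff {n : ℕ} {k : ℤ} (hk : 0 ≤ k) {s : ℤ}
    {l : List ℤ} :
    l ++ [s] ∈ nonnegWalks S (n + 1) k ↔ s ∈ S ∧ l ∈ nonnegWalks S n (k - s) := by
  simp only [nonnegWalks, Set.mem_ofPred_eq, List.length_append, List.length_singleton,
    Nat.add_right_cancel_iff, List.mem_append, List.mem_singleton, or_imp, forall_and,
    forall_eq, List.sum_append, List.sum_singleton, ← eq_sub_iff_add_eq]
  constructor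
  · rintro ⟨hlen, ⟨hmem, hs⟩, hpre, hsum⟩
    refine ⟨hs, hlen, hmem, fun i => ?_, hsum⟩
    rcases le_or_gt i l.length with hi | hi
    · simpa [List.take_append_of_le_length hi] using hpre i
    · simpa [List.take_of_length_le hi.le] using hpre l.length
  · rintro ⟨hs, hlen, hmem, hpre, hsum⟩
    refine ⟨hlen, ⟨hmem, hs⟩, fun i => ?_, hsum⟩
    rcases le_or_gt i l.length with hi | hi
    · rw [List.take_append_of_le_length hi]; exact hpre i
    · rw [List.take_of_length_le (by simp; omega), List.sum_append, List.sum_singleton, hsum]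
      simpa using hk

noncomputable def nonnegWalksSuccEquiv (n : ℕ) {k : ℤ} (hk : 0 ≤ k) :
    (Σ s : S, nonnegWalks S n (k - s)) ≃ nonnegWalks S (n + 1) k :=
  Equiv.ofBijective
    (fun p => ⟨p.2 ++ [p.1.1], (append_singleton_mem_nonnegWalks_iff S hk).2 ⟨p.1.2, p.2.2⟩⟩)
    ⟨fun ⟨s, l⟩ ⟨s', l'⟩ h => by
      obtain ⟨hl, hs⟩ := List.append_singleton_inj.1 (congrArg Subtype.val h)
      obtain rfl : s = s' := Subtype.ext hs
      obtain rfl : l = l' := Subtype.ext hl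
      rfl,
    fun ⟨l, hl⟩ => by
      obtain rfl | ⟨l, s, rfl⟩ := l.eq_nil_or_concat'
      · simp [nonnegWalks] at hl
      · obtain ⟨hs, hl⟩ := (append_singleton_mem_nonnegWalks_iff S hk).1 hl
        exact ⟨⟨⟨s, hs⟩, ⟨l, hl⟩⟩, rfl⟩⟩

theorem finite_nonnegWalks (n : ℕ) (k : ℤ) : (nonnegWalks S n k).Finite := by
  induction n generalizing k with
  | zero => rw [nonnegWalks_zero]; split_ifs <;> simp
  | succ n ih =>
    rcases lt_or_ge k 0 with hk | hk
    · simp [nonnegWalks_eq_empty_of_neg S _ hk]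
    · have := fun s : S => (ih (k - s)).to_subtype
      exact Set.finite_coe_iff.1 (Finite.of_equiv _ (nonnegWalksSuccEquiv S n hk))

theorem card_nonnegWalks_succ (n : ℕ) {k : ℤ} (hk : 0 ≤ k) :
    Nat.card (nonnegWalks S (n + 1) k) = ∑ s ∈ S, Nat.card (nonnegWalks S n (k - s)) := by
  have := fun s : S => (finite_nonnegWalks S n (k - s)).to_subtype
  rw [← Nat.card_congr (nonnegWalksSuccEquiv S n hk), Nat.card_sigma,
    Finset.sum_coe_sort S fun s => Nat.card (nonnegWalks S n (k - s))]

end NonnegWalks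

noncomputable def walkGF (S : Finset ℤ) (k : ℤ) : ℤ⟦X⟧ :=
  mk fun n => Nat.card (nonnegWalks S n k)

theorem excursionGF_eq_walkGF : excursionGF = walkGF {-2, -1, 0, 1, 2} 0 := by
  ext n
  simp only [excursionGF, walkGF, coeff_mk]
  congr 1
  exact Nat.card_congr (Equiv.subtypeEquivRight fun l => by simp [nonnegWalks])

section WalkOperator

variable {R : Type*} [CommRing R]

noncomputable def walkOperator (S : Finset ℤ) (W : ℤ → R⟦X⟧) (k : ℤ) : R⟦X⟧ :=
  if k < 0 then 0 else (if k = 0 then 1 else 0) + X * ∑ s ∈ S, W (k - s)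

variable (S : Finset ℤ)

theorem isXAdicContraction_walkOperator : IsXAdicContraction (walkOperator (R := R) S) := by
  intro n W W' h k
  rcases lt_or_ge k 0 with hk | hk
  · simp [walkOperator, hk]
  · rw [walkOperator, walkOperator, if_neg (not_lt.2 hk), if_neg (not_lt.2 hk),
      add_sub_add_left_eq_sub, ← mul_sub, ← Finset.sum_sub_distrib, pow_succ']
    exact mul_dvd_mul_left X (Finset.dvd_sum fun s _ => h (k - s))

theorem isFixedPt_walkGF : Function.IsFixedPt (walkOperator S) (walkGF S) := by
  funext k
  ext n
  rcases lt_or_ge k 0 with hk | hk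
  · simp [walkOperator, walkGF, hk, nonnegWalks_eq_empty_of_neg S n hk]
  rw [walkOperator, if_neg (not_lt.2 hk)]
  cases n with
  | zero => rw [walkGF, coeff_mk, nonnegWalks_zero]; split_ifs <;> simp
  | succ n =>
    rw [map_add, coeff_succ_X_mul, map_sum, walkGF, coeff_mk, card_nonnegWalks_succ S n hk]
    split_ifs <;> simp [walkGF, coeff_one]

theorem eq_walkGF_of_isFixedPt {W : ℤ → ℤ⟦X⟧} (hW : Function.IsFixedPt (walkOperator S) W) :
    W = walkGF S :=
  (isXAdicContraction_walkOperator S).eq_of_isFixedPt hW (isFixedPt_walkGF S)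

theorem sum_neg_two_to_two_sub (W : ℤ → R⟦X⟧) (k : ℤ) :
    ∑ s ∈ ({-2, -1, 0, 1, 2} : Finset ℤ), W (k - s) =
      W (k + 2) + W (k + 1) + W k + W (k - 1) + W (k - 2) := by
  rw [Finset.sum_insert (by decide), Finset.sum_insert (by decide), Finset.sum_insert (by decide),
    Finset.sum_insert (by decide), Finset.sum_singleton, sub_neg_eq_add, sub_neg_eq_add, sub_zero]
  ring

theorem isFixedPt_walkOperator_of_nat {w : ℕ → R⟦X⟧}
    (h0 : w 0 = 1 + X * (w 0 + w 1 + w 2)) (h1 : w 1 = X * (w 0 + w 1 + w 2 + w 3))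
    (h : ∀ m, w (m + 2) = X * (w m + w (m + 1) + w (m + 2) + w (m + 3) + w (m + 4))) :
    Function.IsFixedPt (walkOperator {-2, -1, 0, 1, 2})
      fun k => if k < 0 then 0 else w k.toNat := by
  set W : ℤ → R⟦X⟧ := fun k => if k < 0 then 0 else w k.toNat
  have hneg : ∀ k < 0, W k = 0 := fun k hk => if_pos hk
  have hnat : ∀ (k : ℤ) (n : ℕ), k = n → W k = w n := by rintro _ n rfl; simp [W]
  funext k
  rcases lt_or_ge k 0 with hk | hk
  · rw [walkOperator, if_pos hk, hneg k hk]
  rw [walkOperator, if_neg (not_lt.2 hk), sum_neg_two_to_two_sub]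
  lift k to ℕ using hk
  match k with
  | 0 =>
    rw [hnat _ 2 (by omega), hnat _ 1 (by omega), hnat _ 0 (by omega), hneg _ (by omega),
      hneg _ (by omega)]
    simp only [Nat.cast_zero, if_true]
    linear_combination h0.symm
  | 1 =>
    rw [hnat _ 3 (by omega), hnat _ 2 (by omega), hnat _ 1 (by omega), hnat _ 0 (by omega),
      hneg _ (by omega)]
    simp only [Nat.cast_one, one_ne_zero, if_false]
    linear_combination h1.symm
  | m + 2 =>
    rw [hnat _ (m + 4) (by omega), hnat _ (m + 3) (by omega), hnat _ (m + 2) (by omega),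
      hnat _ (m + 1) (by omega), hnat _ m (by omega), if_neg (by omega)]
    linear_combination (h m).symm

end WalkOperator

section KernelMethod

variable {A : Type*} [CommRing A]

theorem eq_zero_of_two_step_recurrence {r : ℕ → A} (a b : A)
    (hr : ∀ k, r (k + 2) = a * r (k + 1) + b * r k) (h0 : r 0 = 0) (h1 : r 1 = 0) (k : ℕ) :
    r k = 0 := by
  induction k using Nat.twoStepInduction with
  | zero => exact h0
  | one => exact h1
  | more k ih0 ih1 => rw [hr, ih0, ih1, mul_zero, mul_zero, add_zero]

def kernelSeq (t F g : A) : ℕ → A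
  | 0 => 1
  | 1 => g
  | k + 2 => g * kernelSeq t F g (k + 1) + t * F * kernelSeq t F g k

variable {t F g : A} (hF : F = 1 + t * (F * (1 + g + g ^ 2 + t * F)))
  (hg : g = t * (1 + g + g ^ 2 + t * F + g ^ 3 + 2 * t * F * g))
include hF hg

theorem kernelSeq_add_two (k : ℕ) :
    kernelSeq t F g (k + 2) = t * (kernelSeq t F g k + kernelSeq t F g (k + 1) +
      kernelSeq t F g (k + 2) + kernelSeq t F g (k + 3) + kernelSeq t F g (k + 4)) := by
  set q := kernelSeq t F g
  let r k := t * (q k + q (k + 1) + q (k + 2) + q (k + 3) + q (k + 4)) - q (k + 2)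
  suffices h : ∀ k, r k = 0 from (sub_eq_zero.1 (h k)).symm
  refine eq_zero_of_two_step_recurrence g (t * F) (fun k => ?_) ?_ ?_
  · simp only [r, q, kernelSeq]; ring
  · simp only [r, q, kernelSeq]; linear_combination -(t * hF) - g * hg
  · simp only [r, q, kernelSeq]; linear_combination -(t * g * hF) - (g ^ 2 + t * F) * hg

theorem mul_quartic_eq_zero :
    t * (1 + t * F) * (t ^ 4 * F ^ 4 - t ^ 2 * (t + 1) * F ^ 3 + t * (t + 2) * F ^ 2
      - (t + 1) * F + 1) = 0 := by
  linear_combination (-(t * (1 + t * F) * (1 - t * F) ^ 2)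
      - t * g * (-(t * F) * ((1 - t * F) * g + 1))) * hF
    + (t * F * (-(t * F) * ((1 - t * F) * g + 1))) * hg

end KernelMethod

section KernelSolution

variable {R : Type*} [CommRing R]

theorem isFixedPt_kernelSeq_mul {F g : R⟦X⟧} (hF : F = 1 + X * (F * (1 + g + g ^ 2 + X * F)))
    (hg : g = X * (1 + g + g ^ 2 + X * F + g ^ 3 + 2 * X * F * g)) :
    Function.IsFixedPt (walkOperator {-2, -1, 0, 1, 2})
      fun k => if k < 0 then 0 else kernelSeq X F g k.toNat * F :=
  isFixedPt_walkOperator_of_nat (w := fun n => kernelSeq X F g n * F)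
    (by simp only [kernelSeq]; linear_combination hF)
    (by simp only [kernelSeq]; linear_combination F * hg)
    (fun m => by linear_combination F * kernelSeq_add_two hF hg m)

noncomputable def kernelMap (p : Fin 2 → R⟦X⟧) : Fin 2 → R⟦X⟧ :=
  ![1 + X * (p 0 * (1 + p 1 + p 1 ^ 2 + X * p 0)),
    X * (1 + p 1 + p 1 ^ 2 + X * p 0 + p 1 ^ 3 + 2 * X * p 0 * p 1)]

theorem isXAdicContraction_kernelMap : IsXAdicContraction (kernelMap (R := R)) := by
  intro n p p' h i
  have h' : ∀ j, Ideal.Quotient.mk (Ideal.span {X ^ n}) (p j) = Ideal.Quotient.mk _ (p' j) :=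
    fun j => Ideal.Quotient.eq.2 (Ideal.mem_span_singleton.2 (h j))
  fin_cases i
  · simp only [kernelMap, Fin.zero_eta, Matrix.cons_val_zero, add_sub_add_left_eq_sub]
    apply X_pow_succ_dvd_X_mul_sub
    simp only [map_add, map_mul, map_pow, map_one, h']
  · simp only [kernelMap, Fin.mk_one, Matrix.cons_val_one, Matrix.cons_val_fin_one]
    apply X_pow_succ_dvd_X_mul_sub
    simp only [map_add, map_mul, map_pow, map_one, map_ofNat, h']

end KernelSolution

theorem excursion_minimalPolynomial :
    X ^ 4 * excursionGF ^ 4 - X ^ 2 * (X + 1) * excursionGF ^ 3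
      + X * (X + 2) * excursionGF ^ 2 - (X + 1) * excursionGF + 1 = 0 := by
  obtain ⟨p, hp⟩ := isXAdicContraction_kernelMap.exists_isFixedPt (R := ℤ)
  have hF : p 0 = 1 + X * (p 0 * (1 + p 1 + p 1 ^ 2 + X * p 0)) := (congrFun hp 0).symm
  have hg : p 1 = X * (1 + p 1 + p 1 ^ 2 + X * p 0 + p 1 ^ 3 + 2 * X * p 0 * p 1) :=
    (congrFun hp 1).symm
  have hexc : excursionGF = p 0 := by
    rw [excursionGF_eq_walkGF, ← eq_walkGF_of_isFixedPt _ (isFixedPt_kernelSeq_mul hF hg)]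
    simp [kernelSeq]
  have hne : X * (1 + X * p 0) ≠ 0 :=
    mul_ne_zero X_ne_zero fun h => by simpa using congrArg constantCoeff h
  rw [hexc]
  exact (mul_eq_zero.1 (mul_quartic_eq_zero hF hg)).resolve_left hne
end

section
/- Let K(t) ∈ ℤ⟦t⟧ be the power series whose coefficient of t^n is the number of lists of n integers, each belonging to {−2, −1, 0, 1, 2}, all of whose prefix sums are ≥ 0 (nonnegative meanders). Then t²(5t − 1)²K⁴ + t(5t − 1)²K³ + 3t(5t − 1)K² + (5t − 1)K + 1 = 0 in ℤ⟦t⟧. -/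
open PowerSeries

/-- The generating function for nonnegative meanders with step set
`{-2, -1, 0, 1, 2}`: the coefficient of `t^n` is the number of lists of `n`
integers from that set, all of whose prefix sums are `≥ 0`. -/
noncomputable def meanderGF : PowerSeries ℤ :=
  PowerSeries.mk fun n =>
    (Nat.card {l : List ℤ //
      l.length = n ∧
      (∀ x ∈ l, x ∈ ({-2, -1, 0, 1, 2} : Set ℤ)) ∧
      (∀ i : ℕ, 0 ≤ (l.take i).sum)} : ℤ)

/-!
Let `A` and `B` count the walks with steps in `{-2, …, 2}` that stay nonnegative until their last
step, which takes them to height `-1`, resp. `-2`. Cutting a walk at the first time it drops below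
its starting height (by `1` or `2`) gives the system
`A = t (1 + A + A² + B + A³ + 2AB)`, `B = t (1 + B + AB + A²B + B²)`,
and deleting the last step of a meander gives `(1 - 5t) K = 1 - A - B`: a meander followed by any
step is a meander, an `A`-walk or a `B`-walk. Eliminating `A` and `B` gives the quartic times
`1 + 5tK - t(1 - 5t)K²`, a factor with constant term `1`.
-/

open Finset

namespace List

theorem exists_append_of_sum_neg {l : List ℤ} (h : l.sum < 0) :
    ∃ u v, l = u ++ v ∧ u.sum < 0 ∧ ∀ i < u.length, 0 ≤ (u.take i).sum := by
  have hex : ∃ i, (l.take i).sum < 0 := ⟨l.length, by rwa [take_length]⟩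
  refine ⟨l.take (Nat.find hex), l.drop (Nat.find hex), (take_append_drop _ _).symm,
    Nat.find_spec hex, fun i hi => ?_⟩
  have hi' : i < Nat.find hex := hi.trans_le (length_take_le _ _)
  rw [take_take, min_eq_left hi'.le]
  exact not_lt.1 (Nat.find_min hex hi')

theorem length_le_of_append_eq {u v u' v' : List ℤ} (h : u ++ v = u' ++ v') (hu : u.sum < 0)
    (hu' : ∀ i < u'.length, 0 ≤ (u'.take i).sum) : u'.length ≤ u.length := by
  by_contra! hlt
  have : u'.take u.length = u := by
    rw [← take_append_of_le_length hlt.le, ← h, take_left]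
  exact hu.not_ge (this ▸ hu' _ hlt)

theorem append_inj_of_sum_neg {u v u' v' : List ℤ} (h : u ++ v = u' ++ v') (hu : u.sum < 0)
    (hu' : u'.sum < 0) (hpu : ∀ i < u.length, 0 ≤ (u.take i).sum)
    (hpu' : ∀ i < u'.length, 0 ≤ (u'.take i).sum) : u = u' ∧ v = v' :=
  append_inj h <|
    le_antisymm (length_le_of_append_eq h.symm hu' hpu) (length_le_of_append_eq h hu hpu')

theorem le_sum_of_take_nonneg {b : ℤ} {l : List ℤ} (hb : ∀ x ∈ l, b ≤ x)
    (hl : ∀ i < l.length, 0 ≤ (l.take i).sum) (hne : l ≠ []) : b ≤ l.sum := by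
  have hlast := hb _ (getLast_mem hne)
  have hinit := hl (l.length - 1) <| by
    simpa [Nat.sub_lt_iff_lt_add, Nat.pos_iff_ne_zero] using hne
  rw [← dropLast_eq_take] at hinit
  rw [← dropLast_concat_getLast hne, sum_append, sum_singleton]
  omega

end List

namespace Meander

variable (S : Finset ℤ)

/-- Heights are `m` plus the prefix sums; all but the final one must be `≥ 0`, so for
`m ≥ 0 > e` these are the first passages below zero. -/
def walks (m : ℤ) (n : ℕ) : Set (List ℤ) :=
  {l | l.length = n ∧ (∀ x ∈ l, x ∈ S) ∧ ∀ i < n, 0 ≤ m + (l.take i).sum}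

def passages (m e : ℤ) (n : ℕ) : Set (List ℤ) :=
  {l | l ∈ walks S m n ∧ m + l.sum = e}

def meanders (n : ℕ) : Set (List ℤ) :=
  {l | l.length = n ∧ (∀ x ∈ l, x ∈ S) ∧ ∀ i, 0 ≤ (l.take i).sum}

theorem finite_words (n : ℕ) : {l : List ℤ | l.length = n ∧ ∀ x ∈ l, x ∈ S}.Finite := by
  refine ((List.finite_length_eq S n).image (List.map Subtype.val)).subset ?_
  rintro l ⟨hl, hS⟩
  lift l to List S using hS
  exact ⟨l, by simpa using hl, rfl⟩

instance (m : ℤ) (n : ℕ) : Finite (walks S m n) :=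
  ((finite_words S n).subset fun _ hl => ⟨hl.1, hl.2.1⟩).to_subtype

instance (m e : ℤ) (n : ℕ) : Finite (passages S m e n) :=
  ((finite_words S n).subset fun _ hl => ⟨hl.1.1, hl.1.2.1⟩).to_subtype

instance (n : ℕ) : Finite (meanders S n) :=
  ((finite_words S n).subset fun _ hl => ⟨hl.1, hl.2.1⟩).to_subtype

noncomputable def passageSeries (m e : ℤ) : ℤ⟦X⟧ :=
  mk fun n => Nat.card (passages S m e n)

noncomputable def meanderSeries : ℤ⟦X⟧ :=
  mk fun n => Nat.card (meanders S n)

variable {S} {m e : ℤ} {n : ℕ}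

theorem coeff_passageSeries : coeff n (passageSeries S m e) = Nat.card (passages S m e n) :=
  coeff_mk _ _

theorem mem_meanders_iff {l : List ℤ} : l ∈ meanders S n ↔ l ∈ walks S 0 n ∧ 0 ≤ l.sum := by
  refine ⟨fun ⟨hn, hS, h⟩ => ⟨⟨hn, hS, fun i _ => by simpa using h i⟩, by simpa [← hn] using h n⟩,
    ?_⟩
  rintro ⟨⟨hn, hS, h⟩, hsum⟩
  refine ⟨hn, hS, fun i => ?_⟩
  rcases lt_or_ge i n with hi | hi
  · simpa using h i hi
  · rwa [List.take_of_length_le (hn ▸ hi)]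

theorem sum_take_nonneg_of_mem_walks {l : List ℤ} (hl : l ∈ walks S 0 n) :
    ∀ k < l.length, 0 ≤ (l.take k).sum := fun k hk => by
  simpa using hl.2.2 k (hl.1 ▸ hk)

theorem sum_neg_of_mem_passages {d : ℤ} {l : List ℤ} (hd : d < 0) (hl : l ∈ passages S 0 d n) :
    l.sum < 0 := by
  simpa [← hl.2] using hd

theorem walks_zero : walks S m 0 = {[]} := by
  ext l
  simp +contextual [walks, List.length_eq_zero_iff]

theorem cons_mem_walks {s : ℤ} {l : List ℤ} (hm : 0 ≤ m) :
    s :: l ∈ walks S m (n + 1) ↔ s ∈ S ∧ l ∈ walks S (m + s) n := by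
  simp only [walks, Set.mem_ofPred_eq, List.length_cons, add_left_inj, List.forall_mem_cons]
  constructor
  · rintro ⟨hn, ⟨hs, hS⟩, h⟩
    exact ⟨hs, hn, hS, fun i hi => by simpa [add_assoc] using h (i + 1) (by omega)⟩
  · rintro ⟨hs, hn, hS, h⟩
    refine ⟨hn, ⟨hs, hS⟩, fun i hi => ?_⟩
    cases i with
    | zero => simpa using hm
    | succ i => simpa [add_assoc] using h i (by omega)

theorem cons_mem_passages {s : ℤ} {l : List ℤ} (hm : 0 ≤ m) :
    s :: l ∈ passages S m e (n + 1) ↔ s ∈ S ∧ l ∈ passages S (m + s) e n := by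
  simp only [passages, Set.mem_ofPred_eq, cons_mem_walks hm, List.sum_cons, add_assoc, and_assoc]

theorem append_mem_passages_iff {u v : List ℤ} {i j : ℕ} (hm : 0 ≤ m) (hu : u ∈ walks S 0 i) :
    u ++ v ∈ passages S m e (i + j) ↔ v ∈ passages S (m + u.sum) e j := by
  obtain ⟨rfl, huS, hu⟩ := hu
  have key : (∀ k < u.length + j, 0 ≤ m + ((u ++ v).take k).sum) ↔
      ∀ k < j, 0 ≤ m + u.sum + (v.take k).sum := by
    constructor
    · intro h k hk
      simpa [List.take_length_add_append, add_assoc] using h (u.length + k) (by omega)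
    intro h k hk
    rcases lt_or_ge k u.length with hku | hku
    · rw [List.take_append_of_le_length hku.le]
      linarith [hu k hku]
    · obtain ⟨k, rfl⟩ := Nat.exists_eq_add_of_le hku
      simpa [List.take_length_add_append, add_assoc] using h k (by omega)
  simp only [passages, walks, Set.mem_ofPred_eq, List.length_append, Nat.add_left_cancel_iff,
    List.mem_append, or_imp, forall_and, List.sum_append, key, ← add_assoc]
  tauto

theorem append_singleton_mem_walks_iff {l : List ℤ} {s : ℤ} :
    l ++ [s] ∈ walks S 0 (n + 1) ↔ l ∈ meanders S n ∧ s ∈ S := by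
  simp only [walks, meanders, Set.mem_ofPred_eq, List.length_append, List.length_singleton,
    Nat.add_right_cancel_iff, List.mem_append, List.mem_singleton, or_imp, forall_and,
    forall_eq, zero_add]
  constructor
  · rintro ⟨rfl, ⟨hS, hs⟩, h⟩
    refine ⟨⟨rfl, hS, fun i => ?_⟩, hs⟩
    rcases le_or_gt i l.length with hi | hi
    · simpa [List.take_append_of_le_length hi] using h i (by omega)
    · simpa [List.take_of_length_le hi.le] using h l.length (by omega)
  · rintro ⟨⟨rfl, hS, h⟩, hs⟩
    refine ⟨rfl, ⟨hS, hs⟩, fun i hi => ?_⟩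
    rw [List.take_append_of_le_length (by omega)]
    exact h i

theorem walks_succ_eq_image :
    walks S 0 (n + 1) = (fun p : List ℤ × ℤ => p.1 ++ [p.2]) '' (meanders S n ×ˢ S) := by
  ext l
  rcases l.eq_nil_or_concat with rfl | ⟨l, s, rfl⟩
  · simp [walks]
  · simp [append_singleton_mem_walks_iff]

theorem card_passages_zero : Nat.card (passages S m e 0) = if m = e then 1 else 0 := by
  have : passages S m e 0 = {l | l = [] ∧ m = e} := by
    ext l
    simp only [passages, walks_zero, Set.mem_ofPred_eq, Set.mem_singleton_iff]
    constructor
    · rintro ⟨rfl, h⟩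
      simpa using h
    · rintro ⟨rfl, rfl⟩
      simp
  rw [this]
  split_ifs with h <;> simp [h]

theorem card_passages_succ (hm : 0 ≤ m) :
    Nat.card (passages S m e (n + 1)) = ∑ s ∈ S, Nat.card (passages S (m + s) e n) := by
  rw [← sum_coe_sort S, ← Nat.card_sigma]
  refine (Nat.card_congr (Equiv.ofBijective
    (fun p => ⟨p.1 :: p.2, (cons_mem_passages hm).2 ⟨p.1.2, p.2.2⟩⟩) ⟨?_, ?_⟩)).symm
  · rintro ⟨⟨s, hs⟩, l, hl⟩ ⟨⟨s', hs'⟩, l', hl'⟩ h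
    simp only [Subtype.mk.injEq, List.cons.injEq] at h
    obtain ⟨rfl, rfl⟩ := h
    rfl
  · rintro ⟨_ | ⟨s, l⟩, hl⟩
    · simp [passages, walks] at hl
    · obtain ⟨hs, hl⟩ := (cons_mem_passages hm).1 hl
      exact ⟨⟨⟨s, hs⟩, l, hl⟩, rfl⟩

/-- Cut the walk when it first drops below its starting height, by some `d ∈ [b, 0)`. -/
theorem card_passages_eq_sum_firstDrop {b : ℤ} (hS : ∀ s ∈ S, b ≤ s) (hm : 0 ≤ m) (he : e < m) :
    Nat.card (passages S m e n) = ∑ d ∈ Ico b 0, ∑ p ∈ antidiagonal n,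
      Nat.card (passages S 0 d p.1) * Nat.card (passages S (m + d) e p.2) := by
  simp only [← sum_coe_sort (Ico b 0), ← sum_coe_sort (antidiagonal n), ← Nat.card_prod,
    ← Nat.card_sigma]
  symm
  refine Nat.card_congr (Equiv.ofBijective (fun ⟨d, p, u, v⟩ => ⟨u.1 ++ v.1, ?_⟩) ⟨?_, ?_⟩)
  · have hd : u.1.sum = d := by simpa using u.2.2
    have h := (append_mem_passages_iff hm u.2.1).2 (by rw [hd]; exact v.2)
    rwa [mem_antidiagonal.1 p.2] at h
  · rintro ⟨⟨d, hd⟩, ⟨⟨i, j⟩, hij⟩, ⟨u, hu⟩, ⟨v, hv⟩⟩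
      ⟨⟨d', hd'⟩, ⟨⟨i', j'⟩, hij'⟩, ⟨u', hu'⟩, ⟨v', hv'⟩⟩ h
    simp only [Subtype.mk.injEq] at h
    obtain ⟨rfl, rfl⟩ := List.append_inj_of_sum_neg h
      (sum_neg_of_mem_passages (mem_Ico.1 hd).2 hu) (sum_neg_of_mem_passages (mem_Ico.1 hd').2 hu')
      (sum_take_nonneg_of_mem_walks hu.1) (sum_take_nonneg_of_mem_walks hu'.1)
    obtain rfl : d = d' := hu.2.symm.trans hu'.2
    obtain rfl : i = i' := hu.1.1.symm.trans hu'.1.1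
    obtain rfl : j = j' := by
      have := mem_antidiagonal.1 hij
      have := mem_antidiagonal.1 hij'
      omega
    rfl
  · rintro ⟨l, ⟨hln, hlS, hl⟩, hle⟩
    obtain ⟨u, v, rfl, hneg, hu⟩ := List.exists_append_of_sum_neg (l := l) (by omega)
    have huS : ∀ x ∈ u, x ∈ S := fun x hx => hlS x (List.mem_append_left v hx)
    have huw : u ∈ walks S 0 u.length := ⟨rfl, huS, fun k hk => by simpa using hu k hk⟩
    have hd : u.sum ∈ Ico b 0 := mem_Ico.2
      ⟨List.le_sum_of_take_nonneg (fun x hx => hS x (huS x hx)) hu (by rintro rfl; simp at hneg),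
        hneg⟩
    subst hln
    have hv : v ∈ passages S (m + u.sum) e v.length := (append_mem_passages_iff hm huw).1 <| by
      rw [← List.length_append]
      exact ⟨⟨rfl, hlS, hl⟩, hle⟩
    exact ⟨⟨⟨u.sum, hd⟩, ⟨(u.length, v.length), by simp⟩, ⟨u, huw, by simp⟩, ⟨v, hv⟩⟩, rfl⟩

theorem card_walks_succ : Nat.card (walks S 0 (n + 1)) = Nat.card (meanders S n) * #S := by
  have hinj : Function.Injective fun p : List ℤ × ℤ => p.1 ++ [p.2] :=
    fun p q h => Prod.ext_iff.2 (List.append_singleton_inj.1 h)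
  simp only [Nat.card_coe_set_eq, walks_succ_eq_image, Set.ncard_image_of_injective _ hinj,
    Set.ncard_prod, Set.ncard_coe_finset]

theorem card_walks_eq {b : ℤ} (hS : ∀ s ∈ S, b ≤ s) :
    Nat.card (walks S 0 n) =
      Nat.card (meanders S n) + ∑ d ∈ Ico b 0, Nat.card (passages S 0 d n) := by
  rw [← sum_coe_sort, ← Nat.card_sigma, ← Nat.card_sum]
  symm
  refine Nat.card_congr (Equiv.ofBijective (Sum.elim (fun l => ⟨l, (mem_meanders_iff.1 l.2).1⟩)
    (fun p => ⟨p.2, p.2.2.1⟩)) ⟨?_, ?_⟩)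
  · refine Function.Injective.sumElim (fun l l' h => Subtype.ext (Subtype.mk.inj h))
      (fun ⟨d, l, hl⟩ ⟨d', l', hl'⟩ h => ?_) (fun l ⟨d, l', hl'⟩ h => ?_)
    · simp only [Subtype.mk.injEq] at h
      subst h
      obtain rfl : d = d' := Subtype.ext (hl.2.symm.trans hl'.2)
      rfl
    · simp only [Subtype.mk.injEq] at h
      have h1 := (mem_meanders_iff.1 l.2).2
      have h2 := sum_neg_of_mem_passages (mem_Ico.1 d.2).2 hl'
      rw [h] at h1
      omega
  · rintro ⟨l, hl⟩
    by_cases h : 0 ≤ l.sum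
    · exact ⟨Sum.inl ⟨l, mem_meanders_iff.2 ⟨hl, h⟩⟩, rfl⟩
    · have hd : l.sum ∈ Ico b 0 := mem_Ico.2 ⟨List.le_sum_of_take_nonneg
        (fun x hx => hS x (hl.2.1 x hx)) (sum_take_nonneg_of_mem_walks hl)
        (by rintro rfl; simp at h), by omega⟩
      exact ⟨Sum.inr ⟨⟨l.sum, hd⟩, l, hl, zero_add _⟩, rfl⟩

theorem passageSeries_of_neg (hm : m < 0) : passageSeries S m e = if m = e then 1 else 0 := by
  ext n
  cases n with
  | zero => rw [coeff_passageSeries, card_passages_zero]; split_ifs <;> simp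
  | succ n =>
    have : passages S m e (n + 1) = ∅ := Set.eq_empty_of_forall_notMem fun l hl => by
      have := hl.1.2.2 0 n.succ_pos
      simp only [List.take_zero, List.sum_nil, add_zero] at this
      omega
    rw [coeff_passageSeries, this]
    split_ifs <;> simp [coeff_one]

theorem passageSeries_eq_X_mul_sum (hm : 0 ≤ m) (hme : m ≠ e) :
    passageSeries S m e = X * ∑ s ∈ S, passageSeries S (m + s) e := by
  ext n
  cases n with
  | zero => rw [coeff_passageSeries, card_passages_zero, if_neg hme, coeff_zero_X_mul]; rfl
  | succ n =>
    rw [coeff_passageSeries, coeff_succ_X_mul, map_sum, card_passages_succ hm]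
    simp [coeff_passageSeries]

theorem passageSeries_eq_sum_firstDrop {b : ℤ} (hS : ∀ s ∈ S, b ≤ s) (hm : 0 ≤ m) (he : e < m) :
    passageSeries S m e = ∑ d ∈ Ico b 0, passageSeries S 0 d * passageSeries S (m + d) e := by
  ext n
  simp only [coeff_passageSeries, map_sum, coeff_mul, card_passages_eq_sum_firstDrop hS hm he]
  push_cast
  rfl

theorem meanderSeries_add_sum_passageSeries {b : ℤ} (hS : ∀ s ∈ S, b ≤ s) :
    meanderSeries S + ∑ d ∈ Ico b 0, passageSeries S 0 d =
      1 + (#S : ℤ⟦X⟧) * X * meanderSeries S := by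
  ext n
  have hcoeff : coeff n (meanderSeries S + ∑ d ∈ Ico b 0, passageSeries S 0 d) =
      Nat.card (walks S 0 n) := by
    simp [meanderSeries, coeff_passageSeries, card_walks_eq hS]
  rw [hcoeff]
  cases n with
  | zero => simp [walks_zero]
  | succ n =>
    rw [card_walks_succ, mul_comm _ X, mul_assoc, map_add, coeff_succ_X_mul, ← map_natCast C,
      coeff_C_mul]
    simp [meanderSeries, mul_comm]

end Meander

section Elimination

variable {R : Type*} [CommRing R] {t K A B : R}

/-- Modulo the two equations, `z² - A z - B` divides `t (z⁴ + z³ + z² + z + 1) - z²` with cofactor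
`t z² + t (1 + A) z + t (1 + A + A² + B) - 1`; this is that factorization at `z = 1`. -/
theorem one_sub_mul_one_sub_eq (hA : A = t * (1 + A + A ^ 2 + B + A ^ 3 + 2 * A * B))
    (hB : B = t * (1 + B + A * B + A ^ 2 * B + B ^ 2)) :
    (1 - A - B) * (1 - t * (3 + 2 * A + A ^ 2 + B)) = 1 - 5 * t := by
  linear_combination -hA - hB

theorem quartic_eq_zero_of_firstDrop [IsDomain R]
    (hA : A = t * (1 + A + A ^ 2 + B + A ^ 3 + 2 * A * B))
    (hB : B = t * (1 + B + A * B + A ^ 2 * B + B ^ 2)) (hK : (1 - 5 * t) * K = 1 - A - B)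
    (hu : 1 - 5 * t ≠ 0) (hF : 1 + 5 * t * K - t * (1 - 5 * t) * K ^ 2 ≠ 0) :
    t ^ 2 * (5 * t - 1) ^ 2 * K ^ 4 + t * (5 * t - 1) ^ 2 * K ^ 3
      + 3 * t * (5 * t - 1) * K ^ 2 + (5 * t - 1) * K + 1 = 0 := by
  have hW : K * (1 - t * (3 + 2 * A + A ^ 2 + B)) = 1 := mul_left_cancel₀ hu <| by
    linear_combination (1 - t * (3 + 2 * A + A ^ 2 + B)) * hK + one_sub_mul_one_sub_eq hA hB
  have hQ : t * K * (A ^ 2 + A) = K * (1 - 4 * t + t * (1 - 5 * t) * K) - 1 := by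
    linear_combination -hW - t * K * hK
  -- reducing `K * hA`, a cubic in `A`, modulo the quadratic `hQ` leaves a linear equation
  have hA' : A * (1 + t * (1 - 5 * t) * K ^ 2) =
      2 - 2 * (1 - 5 * t) * K - 3 * t * (1 - 5 * t) * K ^ 2 := by
    linear_combination K * hA + (A - 2) * hQ + K * t * (1 + 2 * A) * hK
  have : (1 + 5 * t * K - t * (1 - 5 * t) * K ^ 2) *
      (t ^ 2 * (5 * t - 1) ^ 2 * K ^ 4 + t * (5 * t - 1) ^ 2 * K ^ 3
        + 3 * t * (5 * t - 1) * K ^ 2 + (5 * t - 1) * K + 1) = 0 := by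
    linear_combination (1 + t * (1 - 5 * t) * K ^ 2) ^ 2 * hQ
      - t * K * (3 - 2 * (1 - 5 * t) * K - 2 * t * (1 - 5 * t) * K ^ 2
        + A * (1 + t * (1 - 5 * t) * K ^ 2)) * hA'
  exact (mul_eq_zero.1 this).resolve_left hF

end Elimination

namespace Meander

def fiveSteps : Finset ℤ := {-2, -1, 0, 1, 2}

local notation "𝒜" => passageSeries fiveSteps 0 (-1)
local notation "ℬ" => passageSeries fiveSteps 0 (-2)

theorem neg_two_le_of_mem_fiveSteps : ∀ s ∈ fiveSteps, -2 ≤ s := by decide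

theorem Ico_neg_two_zero : Ico (-2 : ℤ) 0 = {-2, -1} := by decide

theorem sum_fiveSteps {M : Type*} [AddCommMonoid M] (f : ℤ → M) :
    ∑ s ∈ fiveSteps, f s = f (-2) + f (-1) + f 0 + f 1 + f 2 := by
  simp [fiveSteps, add_assoc]

theorem passageSeries_fiveSteps_zero {e : ℤ} (he : e < 0) :
    passageSeries fiveSteps 0 e = X * (passageSeries fiveSteps (-2) e
      + (1 + ℬ + 𝒜 * ℬ) * passageSeries fiveSteps (-1) e
      + (1 + 𝒜 + 𝒜 ^ 2 + ℬ) * passageSeries fiveSteps 0 e) := by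
  have h0 := passageSeries_eq_X_mul_sum (S := fiveSteps) le_rfl he.ne'
  have h1 := passageSeries_eq_sum_firstDrop neg_two_le_of_mem_fiveSteps (m := 1) (e := e)
    zero_le_one (by omega)
  have h2 := passageSeries_eq_sum_firstDrop neg_two_le_of_mem_fiveSteps (m := 2) (e := e)
    zero_le_two (by omega)
  rw [sum_fiveSteps] at h0
  rw [Ico_neg_two_zero, sum_pair (by decide)] at h1 h2
  norm_num at h0 h1 h2
  linear_combination h0 + X * h2 + X * (1 + 𝒜) * h1

theorem passageSeries_zero_neg_one_eq : 𝒜 = X * (1 + 𝒜 + 𝒜 ^ 2 + ℬ + 𝒜 ^ 3 + 2 * 𝒜 * ℬ) := by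
  have h := passageSeries_fiveSteps_zero (e := -1) (by norm_num)
  rw [passageSeries_of_neg (m := -2) (by norm_num), if_neg (by norm_num),
    passageSeries_of_neg (m := -1) (by norm_num), if_pos rfl] at h
  linear_combination h

theorem passageSeries_zero_neg_two_eq : ℬ = X * (1 + ℬ + 𝒜 * ℬ + 𝒜 ^ 2 * ℬ + ℬ ^ 2) := by
  have h := passageSeries_fiveSteps_zero (e := -2) (by norm_num)
  rw [passageSeries_of_neg (m := -2) (by norm_num), if_pos rfl,
    passageSeries_of_neg (m := -1) (by norm_num), if_neg (by norm_num)] at h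
  linear_combination h

theorem meanderGF_eq_meanderSeries : meanderGF = meanderSeries fiveSteps := by
  ext n
  simp only [meanderGF, meanderSeries, coeff_mk, Nat.cast_inj]
  exact Nat.card_congr (Equiv.subtypeEquivRight fun l => by simp [meanders, fiveSteps])

theorem one_sub_five_X_mul_meanderGF : (1 - 5 * X) * meanderGF = 1 - 𝒜 - ℬ := by
  have h := meanderSeries_add_sum_passageSeries neg_two_le_of_mem_fiveSteps
  rw [Ico_neg_two_zero, sum_pair (by decide), ← meanderGF_eq_meanderSeries,
    show #fiveSteps = 5 from rfl] at h
  push_cast at h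
  linear_combination h

end Meander

theorem meander_minimalPolynomial :
    X ^ 2 * (5 * X - 1) ^ 2 * meanderGF ^ 4 + X * (5 * X - 1) ^ 2 * meanderGF ^ 3
      + 3 * X * (5 * X - 1) * meanderGF ^ 2 + (5 * X - 1) * meanderGF + 1 = 0 := by
  refine quartic_eq_zero_of_firstDrop Meander.passageSeries_zero_neg_one_eq
    Meander.passageSeries_zero_neg_two_eq Meander.one_sub_five_X_mul_meanderGF ?_ ?_ <;>
  · intro h
    simpa using congrArg constantCoeff h
end

section
/- Let S = {(0, −3), (1, −2), (2, 0), (3, 1)} and let F(t) ∈ ℤ⟦t⟧ be the power series whose coefficient of t^n is the number of finite lists of steps from S whose x-components sum to n, all of whose prefix sums of y-components are ≥ −1, and whose total y-sum is 0. Then t¹⁸F⁴ + t¹⁴(t² − 1)F³ + 2t⁷(t² − 1)²F² + (t² − 1)⁵F + (t² − 1)⁴ = 0 in ℤ⟦t⟧. -/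
/-!
Let `E`, `W k` and `M` be the generating functions of walks that stay at height `≥ 0` and end at
height `0`, resp. `k`, and of walks that stay `≥ -1` and end at `-1`. Cutting at the last step from
height `k` to `k + 1` (the only up-step is `(3, 1)`) gives `W (k + 1) = t³ W k E`, so `W 1 = t³E²`
and `W 2 = t⁶E³`. Cutting an excursion after its first step gives `E = 1 + t²E + t³M`. A walk
staying `≥ -1` that dips below `0` does so first by `(1, -2)` from height `1` or by `(0, -3)` from
height `2`; cutting there gives `M = (t W 1 + W 2) E` and `F = E + (t W 1 + W 2) W 1`. Hence `E` is
a root of `P(Y) = 1 + (t² - 1) Y + t⁷Y³ + t⁹Y⁴` and `F = (1 - t²) E²`, and the claimed quartic in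
`F` is `(t² - 1)⁴ P(E) P(-E)`.
-/

open PowerSeries

/-- Generating function for excursions bounded below by `-1` with step set
`S = {(0, -3), (1, -2), (2, 0), (3, 1)}`: the coefficient of `t^n` counts lists
of steps from `S` whose `x`-components sum to `n`, whose prefix `y`-sums are all
`≥ -1`, and whose total `y`-sum is `0`. -/
noncomputable def exc1GF : PowerSeries ℤ :=
  PowerSeries.mk fun n =>
    (Nat.card {L : List (ℕ × ℤ) //
      (∀ s ∈ L, s ∈ ({(0, -3), (1, -2), (2, 0), (3, 1)} : Set (ℕ × ℤ))) ∧
      (L.map Prod.fst).sum = n ∧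
      (∀ i : ℕ, -1 ≤ ((L.map Prod.snd).take i).sum) ∧
      (L.map Prod.snd).sum = 0} : ℤ)

open Finset

structure CombinatorialClass where
  carrier : Type
  size : carrier → ℕ
  finite_size_eq : ∀ n, Finite {x // size x = n}

namespace CombinatorialClass

attribute [instance] finite_size_eq

variable (A B : CombinatorialClass)

noncomputable def gf : PowerSeries ℤ := PowerSeries.mk fun n => Nat.card {x // A.size x = n}

@[simp] lemma coeff_gf (n : ℕ) : coeff n A.gf = Nat.card {x // A.size x = n} := coeff_mk _ _

variable {A B} in
lemma gf_congr (e : A.carrier ≃ B.carrier) (he : ∀ x, B.size (e x) = A.size x) :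
    A.gf = B.gf := by
  ext n
  rw [coeff_gf, coeff_gf, Nat.card_congr (e.subtypeEquiv (p := fun x => A.size x = n)
    (q := fun y => B.size y = n) fun x => by rw [he])]

lemma gf_eq_zero [IsEmpty A.carrier] : A.gf = 0 := by
  ext n
  simp

def unit : CombinatorialClass := ⟨Unit, fun _ => 0, fun _ => inferInstance⟩

lemma gf_unit : unit.gf = 1 := by
  ext n
  rcases n with _ | n <;> simp [unit, coeff_one]

def shift (k : ℕ) : CombinatorialClass where
  carrier := A.carrier
  size x := A.size x + k
  finite_size_eq n :=
    Finite.of_injective (fun x => (⟨x.1, by omega⟩ : {y // A.size y = n - k}))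
      fun x y h => Subtype.ext (congrArg Subtype.val h :)

lemma gf_shift (k : ℕ) : (A.shift k).gf = X ^ k * A.gf := by
  ext n
  rw [coeff_X_pow_mul', coeff_gf]
  split_ifs with h
  · rw [coeff_gf]
    exact congrArg _ (Nat.card_congr (Equiv.subtypeEquivRight fun x =>
      show A.size x + k = n ↔ A.size x = n - k by omega))
  · simp only [Nat.cast_eq_zero, Nat.card_eq_zero]
    exact Or.inl ⟨fun x => h (by have : A.size x.1 + k = n := x.2; omega)⟩

def sumFiberEquiv (n : ℕ) :
    {x : A.carrier ⊕ B.carrier // Sum.elim A.size B.size x = n} ≃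
      {a // A.size a = n} ⊕ {b // B.size b = n} :=
  Equiv.subtypeSum

def sum : CombinatorialClass where
  carrier := A.carrier ⊕ B.carrier
  size := Sum.elim A.size B.size
  finite_size_eq n := Finite.of_equiv _ (sumFiberEquiv A B n).symm

lemma gf_sum : (A.sum B).gf = A.gf + B.gf := by
  ext n
  simp [sum, Nat.card_congr (sumFiberEquiv A B n), Nat.card_sum]

section sigma

variable {ι : Type} (A : ι → CombinatorialClass)

def sigmaFiberEquiv (n : ℕ) :
    {x : Σ i, (A i).carrier // (A x.1).size x.2 = n} ≃ Σ i, {a // (A i).size a = n} where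
  toFun x := ⟨x.1.1, x.1.2, x.2⟩
  invFun y := ⟨⟨y.1, y.2.1⟩, y.2.2⟩

def sigma [Finite ι] : CombinatorialClass where
  carrier := Σ i, (A i).carrier
  size x := (A x.1).size x.2
  finite_size_eq n := Finite.of_equiv _ (sigmaFiberEquiv A n).symm

lemma gf_sigma [Fintype ι] : (sigma A).gf = ∑ i, (A i).gf := by
  ext n
  simp [sigma, Nat.card_congr (sigmaFiberEquiv A n), Nat.card_sigma]

end sigma

def prodFiberEquiv (n : ℕ) :
    {p : A.carrier × B.carrier // A.size p.1 + B.size p.2 = n} ≃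
      Σ ij : antidiagonal n, {a // A.size a = ij.1.1} × {b // B.size b = ij.1.2} where
  toFun p := ⟨⟨(A.size p.1.1, B.size p.1.2), mem_antidiagonal.2 p.2⟩, ⟨p.1.1, rfl⟩, ⟨p.1.2, rfl⟩⟩
  invFun q := ⟨(q.2.1.1, q.2.2.1), by rw [q.2.1.2, q.2.2.2]; exact mem_antidiagonal.1 q.1.2⟩
  right_inv := by
    rintro ⟨⟨⟨i, j⟩, hij⟩, ⟨a, ha⟩, ⟨b, hb⟩⟩
    dsimp only at ha hb
    subst ha hb
    rfl

def prod : CombinatorialClass where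
  carrier := A.carrier × B.carrier
  size p := A.size p.1 + B.size p.2
  finite_size_eq n := Finite.of_equiv _ (prodFiberEquiv A B n).symm

lemma gf_prod : (A.prod B).gf = A.gf * B.gf := by
  ext n
  simp only [prod, coeff_gf, coeff_mul, Nat.card_congr (prodFiberEquiv A B n), Nat.card_sigma,
    Nat.card_prod, Nat.cast_sum, Nat.cast_mul]
  exact sum_coe_sort (antidiagonal n) fun ij =>
    (Nat.card {a // A.size a = ij.1} : ℤ) * Nat.card {b // B.size b = ij.2}

end CombinatorialClass

namespace LatticePath

open CombinatorialClass

variable {S : Finset (ℕ × ℤ)} {b c e k m : ℤ} {s s' u u' : ℕ × ℤ} {L P P' Q Q' : List (ℕ × ℤ)}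

def xSum (L : List (ℕ × ℤ)) : ℕ := (L.map Prod.fst).sum

def ySum (L : List (ℕ × ℤ)) : ℤ := (L.map Prod.snd).sum

def height (L : List (ℕ × ℤ)) (i : ℕ) : ℤ := ((L.map Prod.snd).take i).sum

def StaysAbove (b : ℤ) (L : List (ℕ × ℤ)) : Prop := ∀ i, b ≤ height L i

@[simp] lemma xSum_nil : xSum [] = 0 := rfl
@[simp] lemma xSum_cons : xSum (s :: L) = s.1 + xSum L := List.sum_cons
@[simp] lemma xSum_append : xSum (P ++ Q) = xSum P + xSum Q := by simp [xSum]
@[simp] lemma ySum_nil : ySum [] = 0 := rfl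
@[simp] lemma ySum_cons : ySum (s :: L) = s.2 + ySum L := List.sum_cons
@[simp] lemma ySum_append : ySum (P ++ Q) = ySum P + ySum Q := by simp [ySum]

lemma staysAbove_nil : StaysAbove b [] ↔ b ≤ 0 := by
  simp [StaysAbove, height]

lemma StaysAbove.nonpos (h : StaysAbove b L) : b ≤ 0 := by
  simpa [height] using h 0

lemma staysAbove_cons : StaysAbove b (s :: L) ↔ b ≤ 0 ∧ StaysAbove (b - s.2) L := by
  have height_succ (i : ℕ) : height (s :: L) (i + 1) = s.2 + height L i := by simp [height]
  refine ⟨fun h => ⟨h.nonpos, fun i => ?_⟩, fun ⟨h0, h⟩ i => ?_⟩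
  · linarith [h (i + 1), height_succ i]
  · cases i with
    | zero => simpa [height] using h0
    | succ i => linarith [h i, height_succ i]

lemma StaysAbove.le_ySum (h : StaysAbove b L) : b ≤ ySum L := by
  induction L generalizing b with
  | nil => exact h.nonpos
  | cons s L ih => linarith [ih (staysAbove_cons.1 h).2, ySum_cons (s := s) (L := L)]

lemma StaysAbove.mono (h : StaysAbove b L) (hcb : c ≤ b) : StaysAbove c L :=
  fun i => hcb.trans (h i)

lemma staysAbove_append :
    StaysAbove b (P ++ Q) ↔ StaysAbove b P ∧ StaysAbove (b - ySum P) Q := by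
  induction P generalizing b with
  | nil => simpa [staysAbove_nil] using fun h => h.nonpos
  | cons s P ih => simp [staysAbove_cons, ih, sub_sub, and_assoc]

def walks (S : Finset (ℕ × ℤ)) (b e : ℤ) : Set (List (ℕ × ℤ)) :=
  {L | (∀ s ∈ L, s ∈ S) ∧ StaysAbove b L ∧ ySum L = e}

lemma nil_mem_walks (hb : b ≤ 0) : [] ∈ walks S b 0 :=
  ⟨by simp, staysAbove_nil.2 hb, rfl⟩

lemma cons_mem_walks :
    s :: L ∈ walks S b e ↔ s ∈ S ∧ b ≤ 0 ∧ L ∈ walks S (b - s.2) (e - s.2) := by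
  simp only [walks, Set.mem_ofPred_eq, List.forall_mem_cons, staysAbove_cons, ySum_cons]
  constructor
  · rintro ⟨⟨hs, hL⟩, ⟨hb, hstay⟩, he⟩
    exact ⟨hs, hb, hL, hstay, by linarith⟩
  · rintro ⟨hs, hb, hL, hstay, he⟩
    exact ⟨⟨hs, hL⟩, ⟨hb, hstay⟩, by linarith⟩

lemma append_mem_walks :
    P ++ Q ∈ walks S b e ↔ P ∈ walks S b (ySum P) ∧ Q ∈ walks S (b - ySum P) (e - ySum P) := by
  simp only [walks, Set.mem_ofPred_eq, List.forall_mem_append, staysAbove_append, ySum_append]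
  constructor
  · rintro ⟨⟨hP, hQ⟩, ⟨hbP, hbQ⟩, he⟩
    exact ⟨⟨hP, hbP, trivial⟩, hQ, hbQ, by linarith⟩
  · rintro ⟨⟨hP, hbP, -⟩, hQ, hbQ, he⟩
    exact ⟨⟨hP, hQ⟩, ⟨hbP, hbQ⟩, by linarith⟩

lemma append_cons_mem_walks {b' p q : ℤ} (hP : P ∈ walks S b p) (hs : s ∈ S)
    (hQ : Q ∈ walks S b' q) (hb' : b - p - s.2 ≤ b') (he : p + s.2 + q = e) :
    P ++ s :: Q ∈ walks S b e := by
  obtain ⟨hPS, hPb, rfl⟩ := hP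
  obtain ⟨hQS, hQb, rfl⟩ := hQ
  exact append_mem_walks.2 ⟨⟨hPS, hPb, rfl⟩,
    cons_mem_walks.2 ⟨hs, by linarith [hPb.le_ySum], hQS, hQb.mono hb', by linarith⟩⟩

lemma mem_walks_of_append_cons_mem (h : P ++ s :: Q ∈ walks S b e) :
    s ∈ S ∧ P ∈ walks S b (ySum P) ∧ Q ∈ walks S (b - ySum P - s.2) (e - ySum P - s.2) := by
  obtain ⟨hP, hsQ⟩ := append_mem_walks.1 h
  obtain ⟨hs, -, hQ⟩ := cons_mem_walks.1 hsQ
  exact ⟨hs, hP, hQ⟩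

lemma walks_subset (h : c ≤ b) : walks S b e ⊆ walks S c e :=
  fun _ ⟨hL, hb, he⟩ => ⟨hL, hb.mono h, he⟩

lemma walks_eq_empty (h : 0 < b ∨ e < b) : walks S b e = ∅ := by
  ext L
  simp only [Set.mem_empty_iff_false, iff_false]
  rintro ⟨-, hb, rfl⟩
  have := hb.nonpos
  have := hb.le_ySum
  omega

lemma not_staysAbove_append_cons (h : ySum P + s.2 < b) : ¬ StaysAbove b (P ++ s :: Q) := by
  intro hL
  have := (staysAbove_cons.1 (staysAbove_append.1 hL).2).2.nonpos
  omega

lemma eq_of_append_cons_eq_of_staysAbove (hP : StaysAbove b P) (hP' : StaysAbove b P')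
    (h : ySum P + s.2 < b) (h' : ySum P' + s'.2 < b) (heq : P ++ s :: Q = P' ++ s' :: Q') :
    P = P' ∧ s = s' ∧ Q = Q' := by
  induction P generalizing b P' with
  | nil =>
    cases P' with
    | nil => simpa using heq
    | cons t P' =>
      obtain ⟨rfl, -⟩ := List.cons.inj heq
      have := (staysAbove_cons.1 hP').2.nonpos
      simp only [ySum_nil, zero_add] at h
      omega
  | cons t P ih =>
    cases P' with
    | nil =>
      obtain ⟨rfl, -⟩ := List.cons.inj heq
      have := (staysAbove_cons.1 hP).2.nonpos
      simp only [ySum_nil, zero_add] at h'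
      omega
    | cons t' P' =>
      simp only [List.cons_append, List.cons.injEq] at heq
      obtain ⟨rfl, heq⟩ := heq
      simp only [ySum_cons] at h h'
      obtain ⟨rfl, rfl, rfl⟩ := ih (staysAbove_cons.1 hP).2 (staysAbove_cons.1 hP').2
        (by linarith) (by linarith) heq
      exact ⟨rfl, rfl, rfl⟩

lemma exists_append_cons_of_not_staysAbove (hc : c < 0) (hL : StaysAbove c L)
    (hL' : ¬ StaysAbove (c + 1) L) :
    ∃ P s Q, L = P ++ s :: Q ∧ StaysAbove (c + 1) P ∧ ySum P + s.2 = c := by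
  induction L generalizing c with
  | nil => exact absurd (staysAbove_nil.2 (by omega)) hL'
  | cons s L ih =>
    replace hL := (staysAbove_cons.1 hL).2
    replace hL' : ¬ StaysAbove (c - s.2 + 1) L := by
      rw [staysAbove_cons, ← sub_add_eq_add_sub] at hL'
      exact fun h => hL' ⟨by omega, h⟩
    by_cases hcs : c - s.2 < 0
    · obtain ⟨P, t, Q, rfl, hP, hPt⟩ := ih hcs hL hL'
      rw [sub_add_eq_add_sub] at hP
      exact ⟨s :: P, t, Q, rfl, staysAbove_cons.2 ⟨by omega, hP⟩, by rw [ySum_cons]; linarith⟩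
    · have := hL.nonpos
      exact ⟨[], s, L, rfl, staysAbove_nil.2 (by omega), by rw [ySum_nil]; omega⟩

lemma eq_of_append_cons_eq_of_ySum_eq {A A' B B' : List (ℕ × ℤ)} (hA : ySum A = ySum A')
    (hu : 0 < u.2) (hu' : 0 < u'.2) (hB : StaysAbove 0 B) (hB' : StaysAbove 0 B')
    (heq : A ++ u :: B = A' ++ u' :: B') : A = A' ∧ u = u' ∧ B = B' := by
  induction A generalizing A' with
  | nil =>
    cases A' with
    | nil => simpa using heq
    | cons t A' =>
      obtain ⟨rfl, rfl⟩ := List.cons.inj heq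
      have := (staysAbove_append.1 hB).1.le_ySum
      simp only [ySum_nil, ySum_cons] at hA
      omega
  | cons t A ih =>
    cases A' with
    | nil =>
      obtain ⟨rfl, rfl⟩ := List.cons.inj heq
      have := (staysAbove_append.1 hB').1.le_ySum
      simp only [ySum_nil, ySum_cons] at hA
      omega
    | cons t' A' =>
      simp only [List.cons_append, List.cons.injEq] at heq
      obtain ⟨rfl, heq⟩ := heq
      obtain ⟨rfl, rfl, rfl⟩ := ih (by simpa using hA) heq
      exact ⟨rfl, rfl, rfl⟩

lemma exists_append_cons_of_lt_ySum (hL : ∀ s ∈ L, s.2 ≤ 1) (hk : 0 ≤ k) (hkL : k < ySum L) :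
    ∃ A u B, L = A ++ u :: B ∧ ySum A = k ∧ u.2 = 1 ∧ StaysAbove 0 B := by
  induction L using List.reverseRecOn with
  | nil => rw [ySum_nil] at hkL; omega
  | append_singleton L s ih =>
    simp only [List.forall_mem_append, List.forall_mem_singleton] at hL
    simp only [ySum_append, ySum_cons, ySum_nil, add_zero] at hkL
    by_cases hkL' : k < ySum L
    · obtain ⟨A, u, B, rfl, hA, hu, hB⟩ := ih hL.1 hkL'
      simp only [ySum_append, ySum_cons] at hkL hkL'
      refine ⟨A, u, B ++ [s], by simp, hA, hu,
        staysAbove_append.2 ⟨hB, staysAbove_cons.2 ⟨by omega, staysAbove_nil.2 (by omega)⟩⟩⟩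
    · exact ⟨L, s, [], rfl, by omega, by omega, staysAbove_nil.2 le_rfl⟩

lemma length_le_of_forall_mem (hS : ∀ s ∈ S, s.2 < m * s.1) (hL : ∀ s ∈ L, s ∈ S) :
    (L.length : ℤ) ≤ m * xSum L - ySum L := by
  induction L with
  | nil => simp
  | cons s L ih =>
    rw [List.forall_mem_cons] at hL
    have := hS s hL.1
    simp only [List.length_cons, xSum_cons, ySum_cons]
    push_cast
    linarith [ih hL.2]

lemma finite_setOf_forall_mem_length_le (S : Finset (ℕ × ℤ)) (N : ℕ) :
    {L : List (ℕ × ℤ) | (∀ s ∈ L, s ∈ S) ∧ L.length ≤ N}.Finite :=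
  ((List.finite_length_le S N).image (List.map Subtype.val)).subset fun L ⟨hL, hN⟩ =>
    ⟨L.pmap Subtype.mk hL, by simpa using hN, by simp [List.map_pmap]⟩

def walkClass (hS : ∀ s ∈ S, s.2 < m * s.1) (b e : ℤ) : CombinatorialClass where
  carrier := walks S b e
  size L := xSum L
  finite_size_eq n := by
    have := (finite_setOf_forall_mem_length_le S (m * n - e).toNat).to_subtype
    refine Finite.of_injective (fun L => (⟨L.1.1, L.1.2.1, ?_⟩ :
      {L : List (ℕ × ℤ) | (∀ s ∈ L, s ∈ S) ∧ L.length ≤ (m * n - e).toNat}))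
      fun L L' h => Subtype.ext (Subtype.ext (congrArg Subtype.val h :))
    have := length_le_of_forall_mem hS L.1.2.1
    rw [L.2, L.1.2.2.2] at this
    omega

variable (hS : ∀ s ∈ S, s.2 < m * s.1)

lemma gf_walkClass_eq_zero (h : 0 < b ∨ e < b) : (walkClass hS b e).gf = 0 :=
  have : IsEmpty (walkClass hS b e).carrier := Set.isEmpty_coe_sort.2 (walks_eq_empty h)
  gf_eq_zero _

-- Cut after the first step.
lemma gf_walkClass_zero_of_nonpos (hb : b ≤ 0) :
    (walkClass hS b 0).gf = 1 + ∑ s ∈ S, X ^ s.1 * (walkClass hS (b - s.2) (-s.2)).gf := by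
  let f : (unit.sum (sigma fun s : S =>
      (walkClass hS (b - s.1.2) (-s.1.2)).shift s.1.1)).carrier → walks S b 0
    | .inl _ => ⟨[], nil_mem_walks hb⟩
    | .inr ⟨s, L⟩ => ⟨s.1 :: L.1, cons_mem_walks.2 ⟨s.2, hb, by simpa using L.2⟩⟩
  have hf : f.Bijective := by
    refine ⟨?_, ?_⟩
    · rintro (⟨⟩ | ⟨⟨s, hs⟩, L, hL⟩) (⟨⟩ | ⟨⟨s', hs'⟩, L', hL'⟩) h <;>
        simp only [f, Subtype.mk.injEq, List.cons.injEq, reduceCtorEq] at h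
      · rfl
      · obtain ⟨rfl, rfl⟩ := h
        rfl
    · rintro ⟨_ | ⟨s, L⟩, hL⟩
      · exact ⟨.inl (), rfl⟩
      · obtain ⟨hs, -, hL⟩ := cons_mem_walks.1 hL
        exact ⟨.inr ⟨⟨s, hs⟩, L, by simpa using hL⟩, rfl⟩
  rw [← gf_congr (B := walkClass hS b 0) (Equiv.ofBijective f hf), gf_sum, gf_unit, gf_sigma]
  · simp only [gf_shift]
    exact congrArg _ (sum_coe_sort S fun s => X ^ s.1 * (walkClass hS (b - s.2) (-s.2)).gf)
  · rintro (⟨⟩ | ⟨s, L⟩)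
    · rfl
    · exact (xSum_cons).trans (add_comm _ _)

-- Cut at the first step below height `c + 1`; it lands exactly on `c`.
lemma gf_walkClass_of_neg (hc : c < 0) :
    (walkClass hS c e).gf = (walkClass hS (c + 1) e).gf +
      ∑ s ∈ S, X ^ s.1 * ((walkClass hS (c + 1) (c - s.2)).gf * (walkClass hS 0 (e - c)).gf) := by
  let f : ((walkClass hS (c + 1) e).sum (sigma fun s : S =>
      ((walkClass hS (c + 1) (c - s.1.2)).prod (walkClass hS 0 (e - c))).shift s.1.1)).carrier →
      walks S c e
    | .inl L => ⟨L.1, walks_subset (by omega) L.2⟩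
    | .inr ⟨s, P, Q⟩ => ⟨P.1 ++ s.1 :: Q.1,
        append_cons_mem_walks (walks_subset (by omega) P.2) s.2 Q.2 (by omega) (by omega)⟩
  have hf : f.Bijective := by
    refine ⟨?_, ?_⟩
    · rintro (⟨L, hL⟩ | ⟨⟨s, hs⟩, ⟨P, hP⟩, ⟨Q, hQ⟩⟩)
        (⟨L', hL'⟩ | ⟨⟨s', hs'⟩, ⟨P', hP'⟩, ⟨Q', hQ'⟩⟩) h <;> simp only [f, Subtype.mk.injEq] at h
      · subst h
        rfl
      · subst h
        exact absurd hL.2.1 (not_staysAbove_append_cons (by linarith [hP'.2.2]))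
      · subst h
        exact absurd hL'.2.1 (not_staysAbove_append_cons (by linarith [hP.2.2]))
      · obtain ⟨rfl, rfl, rfl⟩ := eq_of_append_cons_eq_of_staysAbove hP.2.1 hP'.2.1
          (by linarith [hP.2.2]) (by linarith [hP'.2.2]) h
        rfl
    · rintro ⟨L, hL⟩
      by_cases hL' : StaysAbove (c + 1) L
      · exact ⟨.inl ⟨L, hL.1, hL', hL.2.2⟩, rfl⟩
      · obtain ⟨P, s, Q, rfl, hP, hPs⟩ := exists_append_cons_of_not_staysAbove hc hL.2.1 hL'
        obtain ⟨hs, hPw, hQ⟩ := mem_walks_of_append_cons_mem hL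
        refine ⟨.inr ⟨⟨s, hs⟩, ⟨P, hPw.1, hP, by dsimp only; omega⟩, ⟨Q, ?_⟩⟩, rfl⟩
        convert hQ using 2 <;> omega
  rw [← gf_congr (B := walkClass hS c e) (Equiv.ofBijective f hf), gf_sum, gf_sigma]
  · simp only [gf_shift, gf_prod]
    exact congrArg _ (sum_coe_sort S fun s =>
      X ^ s.1 * ((walkClass hS (c + 1) (c - s.2)).gf * (walkClass hS 0 (e - c)).gf))
  · rintro (L | ⟨s, P, Q⟩)
    · rfl
    · change xSum (P.1 ++ s.1 :: Q.1) = xSum P.1 + xSum Q.1 + s.1.1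
      simp only [xSum_append, xSum_cons]
      ring

-- Cut at the last step from height `k` to `k + 1`.
lemma gf_walkClass_zero_add_one (hS1 : ∀ s ∈ S, s.2 ≤ 1) (hk : 0 ≤ k) :
    (walkClass hS 0 (k + 1)).gf =
      (∑ s ∈ S with s.2 = 1, X ^ s.1) * (walkClass hS 0 k).gf * (walkClass hS 0 0).gf := by
  let f : (sigma fun s : S.filter (·.2 = 1) =>
      ((walkClass hS 0 k).prod (walkClass hS 0 0)).shift s.1.1).carrier → walks S 0 (k + 1)
    | ⟨s, A, B⟩ => ⟨A.1 ++ s.1 :: B.1, append_cons_mem_walks A.2 (mem_filter.1 s.2).1 B.2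
        (by linarith [(mem_filter.1 s.2).2]) (by linarith [(mem_filter.1 s.2).2])⟩
  have hf : f.Bijective := by
    refine ⟨?_, ?_⟩
    · rintro ⟨⟨s, hs⟩, ⟨A, hA⟩, ⟨B, hB⟩⟩ ⟨⟨s', hs'⟩, ⟨A', hA'⟩, ⟨B', hB'⟩⟩ h
      simp only [f, Subtype.mk.injEq] at h
      rw [mem_filter] at hs hs'
      obtain ⟨rfl, rfl, rfl⟩ := eq_of_append_cons_eq_of_ySum_eq (hA.2.2.trans hA'.2.2.symm)
        (by omega) (by omega) hB.2.1 hB'.2.1 h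
      rfl
    · rintro ⟨L, hL⟩
      obtain ⟨A, u, B, rfl, hA, hu, hB⟩ := exists_append_cons_of_lt_ySum
        (fun s hs => hS1 s (hL.1 s hs)) hk (by rw [hL.2.2]; omega)
      obtain ⟨huS, hAw, hBw⟩ := mem_walks_of_append_cons_mem hL
      exact ⟨⟨⟨u, mem_filter.2 ⟨huS, hu⟩⟩, ⟨A, hA ▸ hAw⟩, ⟨B, hBw.1, hB, by linarith [hBw.2.2]⟩⟩,
        rfl⟩
  rw [← gf_congr (B := walkClass hS 0 (k + 1)) (Equiv.ofBijective f hf), gf_sigma]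
  · simp only [gf_shift, gf_prod, mul_assoc, ← sum_mul]
    exact congrArg (· * _) (sum_coe_sort (S.filter (·.2 = 1)) fun s => X ^ s.1)
  · rintro ⟨s, A, B⟩
    change xSum (A.1 ++ s.1 :: B.1) = xSum A.1 + xSum B.1 + s.1.1
    simp only [xSum_append, xSum_cons]
    ring

end LatticePath

open LatticePath CombinatorialClass

def exc1Steps : Finset (ℕ × ℤ) := {(0, -3), (1, -2), (2, 0), (3, 1)}

lemma exc1Steps_snd_lt : ∀ s ∈ exc1Steps, s.2 < 1 * s.1 := by decide

lemma sum_exc1Steps {M : Type*} [AddCommMonoid M] (f : ℕ × ℤ → M) :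
    ∑ s ∈ exc1Steps, f s = f (0, -3) + f (1, -2) + f (2, 0) + f (3, 1) := by
  simp [exc1Steps, add_assoc]

local notation "𝒲" => walkClass exc1Steps_snd_lt

lemma exc1_gf_zero_add_one {k : ℤ} (hk : 0 ≤ k) :
    (𝒲 0 (k + 1)).gf = X ^ 3 * (𝒲 0 k).gf * (𝒲 0 0).gf := by
  rw [gf_walkClass_zero_add_one _ (by decide) hk]
  congr
  simp [sum_filter, sum_exc1Steps]

lemma exc1_gf_zero_one : (𝒲 0 1).gf = X ^ 3 * (𝒲 0 0).gf ^ 2 := by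
  simpa [sq, mul_assoc] using exc1_gf_zero_add_one (k := 0) le_rfl

lemma exc1_gf_zero_two : (𝒲 0 2).gf = X ^ 6 * (𝒲 0 0).gf ^ 3 := by
  rw [show (2 : ℤ) = 1 + 1 by norm_num, exc1_gf_zero_add_one zero_le_one, exc1_gf_zero_one]
  ring

lemma exc1_gf_zero_zero :
    (𝒲 0 0).gf = 1 + X ^ 2 * (𝒲 0 0).gf + X ^ 3 * (𝒲 (-1) (-1)).gf := by
  conv_lhs => rw [gf_walkClass_zero_of_nonpos _ le_rfl, sum_exc1Steps]
  norm_num [gf_walkClass_eq_zero, add_assoc]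

lemma exc1_gf_neg_one_neg_one :
    (𝒲 (-1) (-1)).gf = X ^ 4 * (𝒲 0 0).gf ^ 3 + X ^ 6 * (𝒲 0 0).gf ^ 4 := by
  rw [gf_walkClass_of_neg _ (by norm_num), sum_exc1Steps]
  norm_num [gf_walkClass_eq_zero, exc1_gf_zero_one, exc1_gf_zero_two]
  ring

lemma exc1_gf_neg_one_zero :
    (𝒲 (-1) 0).gf = (𝒲 0 0).gf + X ^ 7 * (𝒲 0 0).gf ^ 4 + X ^ 9 * (𝒲 0 0).gf ^ 5 := by
  rw [gf_walkClass_of_neg _ (by norm_num), sum_exc1Steps]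
  norm_num [gf_walkClass_eq_zero, exc1_gf_zero_one, exc1_gf_zero_two]
  ring

lemma exc1_gf_zero_zero_quartic :
    1 + (X ^ 2 - 1) * (𝒲 0 0).gf + X ^ 7 * (𝒲 0 0).gf ^ 3 + X ^ 9 * (𝒲 0 0).gf ^ 4 = 0 := by
  linear_combination -exc1_gf_zero_zero - X ^ 3 * exc1_gf_neg_one_neg_one

lemma exc1GF_eq_gf : exc1GF = (𝒲 (-1) 0).gf := by
  ext n
  rw [exc1GF, coeff_mk, coeff_gf]
  congr 1
  refine Nat.card_congr ((Equiv.subtypeEquivRight fun L => ?_).trans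
    (Equiv.subtypeSubtypeEquivSubtypeInter (· ∈ walks exc1Steps (-1) 0) (xSum · = n)).symm)
  simp only [walks, StaysAbove, height, xSum, ySum, exc1Steps, Set.mem_ofPred_eq, ← mem_coe,
    coe_insert, coe_singleton]
  tauto

lemma exc1GF_eq : exc1GF = (1 - X ^ 2) * (𝒲 0 0).gf ^ 2 := by
  rw [exc1GF_eq_gf, exc1_gf_neg_one_zero]
  linear_combination (𝒲 0 0).gf * exc1_gf_zero_zero_quartic

theorem exc1_minimalPolynomial :
    X ^ 18 * exc1GF ^ 4 + X ^ 14 * (X ^ 2 - 1) * exc1GF ^ 3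
      + 2 * X ^ 7 * (X ^ 2 - 1) ^ 2 * exc1GF ^ 2
      + (X ^ 2 - 1) ^ 5 * exc1GF + (X ^ 2 - 1) ^ 4 = 0 := by
  rw [exc1GF_eq]
  linear_combination (X ^ 2 - 1) ^ 4 * (1 - (X ^ 2 - 1) * (𝒲 0 0).gf - X ^ 7 * (𝒲 0 0).gf ^ 3
    + X ^ 9 * (𝒲 0 0).gf ^ 4) * exc1_gf_zero_zero_quartic
end

section
/- Let B(n) be the number of lists of n integers, each belonging to {−2, −1, 1, 2}, whose total sum is 0. Then for every n ≥ 0: 108(n+1)(2n+1)·B(n) + (78n² + 246n + 216)·B(n+1) − (n+2)(17n − 9)·B(n+2) − 2(n+3)(2n+5)·B(n+3) = 0. -/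
/-- `B n` is the number of bridges of length `n` with step set `{-2, -1, 1, 2}`:
lists of `n` integers from that set with total sum `0`. -/
noncomputable def B (n : ℕ) : ℤ :=
  (Nat.card {l : List ℤ //
    l.length = n ∧
    (∀ x ∈ l, x ∈ ({-2, -1, 1, 2} : Set ℤ)) ∧
    l.sum = 0} : ℤ)

/-!
`B n` is the constant term of `(x⁻² + x⁻¹ + x + x²) ^ n`, i.e. the coefficient of `x ^ (2 n)` in
`P ^ n` with `P = 1 + x + x³ + x⁴`. Creative telescoping (Zeilberger's algorithm) yields a
polynomial `Q_n` such that the recurrence operator, applied to the shifted powers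
`x ^ (6 - 2 j) P ^ (n + j)`, equals `x (Q_n P ^ n)' - (2 n + 6) Q_n P ^ n`. The Euler operator
`x d/dx - k` kills the coefficient of `x ^ k`, so reading off the coefficient of `x ^ (2 n + 6)`
gives the recurrence.
-/

open Polynomial Finset Fintype

theorem coeff_sum_X_pow_pow {R : Type*} [CommSemiring R] (t : Finset ℕ) (n k : ℕ) :
    ((∑ s ∈ t, X ^ s : R[X]) ^ n).coeff k = #{f ∈ piFinset fun _ : Fin n => t | ∑ i, f i = k} := by
  rw [← Fin.prod_const, prod_univ_sum]
  simp_rw [prod_pow_eq_pow_sum, finsetSum_coeff, coeff_X_pow]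
  rw [sum_boole]
  congr! 3
  exact eq_comm

theorem card_lists_eq_card_filter_piFinset {α : Type*} [DecidableEq α] [AddCommMonoid α]
    (S : Finset α) (n : ℕ) (m : α) :
    Nat.card {l : List α // l.length = n ∧ (∀ x ∈ l, x ∈ (S : Set α)) ∧ l.sum = m} =
      #{f ∈ piFinset fun _ : Fin n => S | ∑ i, f i = m} := by
  rw [← Nat.card_eq_finsetCard]
  refine Nat.card_congr ((Equiv.subtypeSubtypeEquivSubtypeInter _ _).symm.trans
    ((Equiv.vectorEquivFin α n).symm.subtypeEquiv fun f => ?_).symm)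
  change _ ↔ (∀ x ∈ (List.Vector.ofFn f).toList, x ∈ S) ∧ (List.Vector.ofFn f).toList.sum = m
  simp [List.Vector.toList_ofFn, List.sum_ofFn]

theorem card_filter_piFinset_image_sub (t : Finset ℕ) (c n k : ℕ) :
    #{f ∈ piFinset fun _ : Fin n => t.image fun s : ℕ => (s : ℤ) - c |
        ∑ i, f i = (k : ℤ) - n * c} =
      #{g ∈ piFinset fun _ : Fin n => t | ∑ i, g i = k} := by
  refine card_nbij' (fun (f : Fin n → ℤ) i => (f i + c).toNat) (fun g i => (g i : ℤ) - c)
    ?_ ?_ ?_ ?_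
  · intro f hf
    simp only [coe_filter, mem_piFinset, mem_image, Set.mem_ofPred_eq] at hf ⊢
    obtain ⟨hmem, hsum⟩ := hf
    have hnonneg : ∀ i, 0 ≤ f i + c := fun i => by obtain ⟨s, -, hs⟩ := hmem i; omega
    refine ⟨fun i => ?_, ?_⟩
    · obtain ⟨s, hs, hfs⟩ := hmem i
      simpa [← hfs] using hs
    · zify
      simp [Int.toNat_of_nonneg (hnonneg _), sum_add_distrib, hsum]
  · intro g hg
    simp only [coe_filter, mem_piFinset, mem_image, Set.mem_ofPred_eq] at hg ⊢
    refine ⟨fun i => ⟨g i, hg.1 i, rfl⟩, ?_⟩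
    simp [← hg.2]
  · intro f hf
    simp only [coe_filter, mem_piFinset, mem_image, Set.mem_ofPred_eq] at hf
    funext i
    obtain ⟨s, -, hs⟩ := hf.1 i
    show ((f i + c).toNat : ℤ) - c = f i
    omega
  · intro g _
    funext i
    simp

theorem mul_derivative_pow {R : Type*} [CommSemiring R] (p : R[X]) (n : ℕ) :
    p * derivative (p ^ n) = C (n : R) * p ^ n * derivative p := by
  cases n with
  | zero => simp
  | succ k => rw [derivative_pow, Nat.add_sub_cancel]; ring

theorem coeff_X_mul_derivative_sub_C_mul_self {R : Type*} [Ring R] (p : R[X]) (k : ℕ) :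
    (X * derivative p - C (k : R) * p).coeff k = 0 := by
  rw [coeff_sub, coeff_C_mul, sub_eq_zero]
  cases k with
  | zero => simp
  | succ k => rw [coeff_X_mul, coeff_derivative, Nat.cast_comm, Nat.cast_succ]

/-- `x ^ 2 (x⁻² + x⁻¹ + x + x²)` -/
noncomputable def stepPoly : ℤ[X] := 1 + X + X ^ 3 + X ^ 4

theorem B_eq_coeff_stepPoly_pow (n : ℕ) : B n = (stepPoly ^ n).coeff (2 * n) := by
  have hsteps : ({-2, -1, 1, 2} : Set ℤ) =
      ↑(({0, 1, 3, 4} : Finset ℕ).image fun s : ℕ => (s : ℤ) - 2) := by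
    ext; simp
  have hpoly : stepPoly = ∑ s ∈ ({0, 1, 3, 4} : Finset ℕ), X ^ s := by
    simp [stepPoly, add_assoc]
  rw [B, hsteps, card_lists_eq_card_filter_piFinset, hpoly, coeff_sum_X_pow_pow,
    ← card_filter_piFinset_image_sub _ 2]
  simp [mul_comm]

theorem coeff_stepPoly_pow_mul_X_pow {n k m : ℕ} (hm : m = 2 * n + k) :
    (stepPoly ^ n * X ^ k).coeff m = B n := by
  rw [hm, coeff_mul_X_pow, B_eq_coeff_stepPoly_pow]

noncomputable def zeilbergerCertificate (a : ℤ) : ℤ[X] :=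
  C (2 * a + 5) + C (7 * a + 18) * X + C (17 * a + 18) * X ^ 2 + C (34 * a + 28) * X ^ 3
    + C (9 * a + 18) * X ^ 4 + C (15 * a + 18) * X ^ 5 - C (15 * a + 18) * X ^ 7
    - C (9 * a + 18) * X ^ 8 - C (34 * a + 28) * X ^ 9 - C (17 * a + 18) * X ^ 10
    - C (7 * a + 18) * X ^ 11 - C (2 * a + 5) * X ^ 12

theorem zeilbergerCertificate_spec (a : ℤ) :
    C (108 * (a + 1) * (2 * a + 1)) * stepPoly * X ^ 6
      + C (78 * a ^ 2 + 246 * a + 216) * stepPoly ^ 2 * X ^ 4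
      - C ((a + 2) * (17 * a - 9)) * stepPoly ^ 3 * X ^ 2
      - C (2 * (a + 3) * (2 * a + 5)) * stepPoly ^ 4
    = X * stepPoly * derivative (zeilbergerCertificate a)
      + zeilbergerCertificate a * (C a * X * derivative stepPoly - C (2 * a + 6) * stepPoly) := by
  simp only [zeilbergerCertificate, stepPoly, derivative_add, derivative_sub,
    derivative_C_mul_X_pow, derivative_C_mul_X, derivative_C, derivative_X_pow, derivative_X,
    derivative_one]
  simp only [map_add, map_sub, map_mul, map_pow, map_ofNat, map_one, map_natCast]
  ring

theorem telescoping_identity (n : ℕ) :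
    C (108 * ((n : ℤ) + 1) * (2 * n + 1)) * (stepPoly ^ n * X ^ 6)
      + C (78 * (n : ℤ) ^ 2 + 246 * n + 216) * (stepPoly ^ (n + 1) * X ^ 4)
      - C (((n : ℤ) + 2) * (17 * n - 9)) * (stepPoly ^ (n + 2) * X ^ 2)
      - C (2 * ((n : ℤ) + 3) * (2 * n + 5)) * stepPoly ^ (n + 3)
    = X * derivative (zeilbergerCertificate n * stepPoly ^ n)
      - C ((2 * n + 6 : ℕ) : ℤ) * (zeilbergerCertificate n * stepPoly ^ n) := by
  have hne : stepPoly ≠ 0 := ne_of_apply_ne (eval 0) (by simp [stepPoly])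
  -- clearing one factor `stepPoly` keeps `stepPoly ^ (n - 1)` out of the derivative of `stepPoly ^ n`
  apply mul_left_cancel₀ hne
  rw [derivative_mul]
  push_cast
  linear_combination stepPoly ^ n * zeilbergerCertificate_spec n
    - X * zeilbergerCertificate n * mul_derivative_pow stepPoly n

theorem bridge_recurrence (n : ℕ) :
    108 * ((n : ℤ) + 1) * (2 * n + 1) * B n
      + (78 * (n : ℤ) ^ 2 + 246 * n + 216) * B (n + 1)
      - ((n : ℤ) + 2) * (17 * n - 9) * B (n + 2)
      - 2 * ((n : ℤ) + 3) * (2 * n + 5) * B (n + 3) = 0 := by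
  have h := congrArg (coeff · (2 * n + 6)) (telescoping_identity n)
  simp only [coeff_X_mul_derivative_sub_C_mul_self] at h
  simp only [coeff_add, coeff_sub, coeff_C_mul] at h
  rwa [coeff_stepPoly_pow_mul_X_pow (by ring), coeff_stepPoly_pow_mul_X_pow (by ring),
    coeff_stepPoly_pow_mul_X_pow (by ring), show 2 * n + 6 = 2 * (n + 3) by ring,
    ← B_eq_coeff_stepPoly_pow] at h
end

section
/- Let G(t) ∈ ℤ⟦t⟧ be the power series whose coefficient of t^n is the number of lists of n integers, each belonging to {−2, −1, 0, 1}, whose total sum is 0. Then (16t³ + 8t² + 11t − 4)G³ + (3 − 2t)G + 1 = 0 in ℤ⟦t⟧. -/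
/-!
With `P(u) = u⁻² + u⁻¹ + 1 + u`, the number of bridges of length `n` is the constant term of
`P(u) ^ n`. Substituting `u ↦ u⁻¹`, it is the constant term of `(φ(u) / u) ^ n`, that is
`[u ^ n] φ(u) ^ n`, where `φ = 1 + u + u² + u³`. By the Lagrange–Good formula,
`G = 1 / (1 - t φ'(y))` where `y = t φ(y)`, and eliminating `y` between these two equations gives
the cubic.

The Lagrange–Good formula is a constant-term computation in `ℤ[u, u⁻¹]⟦t⟧`: with
`φ(u) - φ(y) = (u - y) q(u)`, the kernel factors as `1 - t φ(u) / u = (1 - y / u) (1 - t q(u))`,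
and `(1 - t φ'(y)) / (1 - t φ(u) / u)` splits into `1 / (1 - y / u)`, which involves only
non-positive powers of `u` and has constant term `1`, plus `u` times a series in non-negative
powers of `u`.
-/

open PowerSeries

/-- The generating function for bridges with step set `{-2, -1, 0, 1}`: the
coefficient of `t^n` is the number of lists of `n` integers from that set with
total sum `0`. -/
noncomputable def bridgeGF : PowerSeries ℤ :=
  PowerSeries.mk fun n =>
    (Nat.card {l : List ℤ //
      l.length = n ∧
      (∀ x ∈ l, x ∈ ({-2, -1, 0, 1} : Set ℤ)) ∧
      l.sum = 0} : ℤ)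

open scoped LaurentPolynomial

namespace PowerSeries

variable {R : Type*} [CommRing R]

theorem X_pow_dvd_iterate_sub {F : R⟦X⟧ → R⟦X⟧}
    (hF : ∀ a b n, X ^ n ∣ a - b → X ^ (n + 1) ∣ F a - F b) (a : R⟦X⟧) (m k : ℕ) :
    X ^ m ∣ F^[m + k] a - F^[m] a := by
  induction m with
  | zero => simp
  | succ m ih =>
    rw [Nat.add_right_comm, Function.iterate_succ_apply', Function.iterate_succ_apply']
    exact hF _ _ _ ih

theorem exists_isFixedPt_of_X_pow_dvd_sub {F : R⟦X⟧ → R⟦X⟧}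
    (hF : ∀ a b n, X ^ n ∣ a - b → X ^ (n + 1) ∣ F a - F b) :
    ∃ y, Function.IsFixedPt F y := by
  set y := mk fun n => coeff n (F^[n + 1] 0)
  have hy : ∀ n, X ^ (n + 1) ∣ y - F^[n + 1] 0 := by
    refine fun n => X_pow_dvd_iff.mpr fun k hk => ?_
    obtain ⟨j, rfl⟩ := Nat.exists_eq_add_of_le (Nat.le_of_lt_succ hk)
    have := X_pow_dvd_iff.mp (X_pow_dvd_iterate_sub hF 0 (k + 1) j) k (Nat.lt_succ_self k)
    rw [map_sub, sub_eq_zero, Nat.add_right_comm] at this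
    rw [map_sub, coeff_mk, sub_eq_zero, this]
  refine ⟨y, ext fun n => ?_⟩
  have h₁ := X_pow_dvd_iff.mp (hF _ _ _ (hy n)) n (by omega)
  have h₂ := X_pow_dvd_iff.mp (X_pow_dvd_iterate_sub hF 0 (n + 1) 1) n (Nat.lt_succ_self n)
  rw [map_sub, sub_eq_zero, ← Function.iterate_succ_apply' F] at h₁
  rw [map_sub, sub_eq_zero] at h₂
  rw [h₁, h₂, coeff_mk]

theorem exists_eq_X_mul_aeval (φ : Polynomial R) :
    ∃ y : R⟦X⟧, y = X * Polynomial.aeval y φ := by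
  refine (exists_isFixedPt_of_X_pow_dvd_sub fun a b n hab => ?_).imp fun y hy => hy.symm
  rw [← mul_sub, pow_succ']
  refine mul_dvd_mul_left X (hab.trans ?_)
  simpa only [Polynomial.aeval_def, Polynomial.eval_map] using
    Polynomial.sub_dvd_eval_sub a b (φ.map (algebraMap R R⟦X⟧))

theorem map_aeval (B : Type*) [CommRing B] [Algebra R B] (y : R⟦X⟧) (φ : Polynomial R) :
    map (algebraMap R B) (Polynomial.aeval y φ) = Polynomial.aeval (map (algebraMap R B) y) φ :=
  (Polynomial.aeval_algHom_apply (mapAlgHom (Algebra.ofId R B)) y φ).symm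

theorem aeval_C_X (φ : Polynomial R) :
    Polynomial.aeval (C Polynomial.X : (Polynomial R)⟦X⟧) φ = C φ := by
  conv_rhs => rw [← Polynomial.eval₂_C_X (p := φ), Polynomial.hom_eval₂]
  rw [Polynomial.aeval_def]
  congr 1
  ext r : 1
  exact algebraMap_apply

theorem mk_pow_mul_one_sub_C_mul_X (S : R) : mk (fun n => S ^ n) * (1 - C S * X) = 1 := by
  simpa [rescale_mk] using congrArg (rescale S) (mk_one_mul_one_sub_eq_one R)

end PowerSeries

section LaurentPolynomial

open LaurentPolynomial

variable {R : Type*} [CommRing R]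

theorem Polynomial.coeff_toLaurent_natCast (p : Polynomial R) (n : ℕ) :
    (toLaurent p).coeff n = p.coeff n := by
  rw [coeff_toLaurent]
  exact Finsupp.mapDomain_apply Nat.castEmbedding.injective p.toFinsupp.coeff n

theorem LaurentPolynomial.coeff_zero_T_neg_one_mul_toLaurent_pow (φ : Polynomial R) (n : ℕ) :
    ((T (-1) * Polynomial.toLaurent φ) ^ n).coeff 0 = (φ ^ n).coeff n := by
  rw [mul_pow, T_pow, ← map_pow, T, show (0 : ℤ) = n * -1 + n by ring,
    AddMonoidAlgebra.coeff_single_mul_add, one_mul, Polynomial.coeff_toLaurent_natCast]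

/-- The substitution `X ↦ T⁻¹`. -/
noncomputable def Polynomial.toLaurentInv : Polynomial R →+* R[T;T⁻¹] :=
  (invert (R := R) : R[T;T⁻¹] →+* R[T;T⁻¹]).comp toLaurent

theorem Polynomial.toLaurentInv_C (a : R) :
    toLaurentInv (Polynomial.C a) = LaurentPolynomial.C a := by
  simp [toLaurentInv, toLaurent_C]

theorem Polynomial.toLaurentInv_X : toLaurentInv (Polynomial.X : Polynomial R) = T (-1) := by
  simp [toLaurentInv, toLaurent_X]

theorem Polynomial.coeff_toLaurentInv_zero (p : Polynomial R) :
    (toLaurentInv p).coeff 0 = p.coeff 0 := by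
  simp [toLaurentInv, ← Polynomial.coeff_toLaurent_natCast]

theorem natCard_lists_sum_eq_coeff_pow (D : Finset ℤ) (n : ℕ) (s : ℤ) :
    (Nat.card {l : List ℤ // l.length = n ∧ (∀ x ∈ l, x ∈ D) ∧ l.sum = s} : ℤ) =
      ((∑ d ∈ D, T d : ℤ[T;T⁻¹]) ^ n).coeff s := by
  classical
  set tuples := (Fintype.piFinset fun _ : Fin n => D).filter fun f => ∑ i, f i = s
  have hcard : Nat.card {l : List ℤ // l.length = n ∧ (∀ x ∈ l, x ∈ D) ∧ l.sum = s} =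
      tuples.card := by
    rw [← Nat.card_eq_finsetCard]
    refine Nat.card_congr <|
      (Equiv.subtypeSubtypeEquivSubtypeInter (fun l : List ℤ => l.length = n) _).symm.trans <|
        (Equiv.subtypeEquiv (Equiv.vectorEquivFin ℤ n).symm fun f => ?_).symm
    change _ ↔ (∀ x ∈ (List.Vector.ofFn f).toList, x ∈ D) ∧
      (List.Vector.ofFn f).toList.sum = s
    simp [tuples, List.Vector.toList_ofFn, List.sum_ofFn]
  have hpow : (∑ d ∈ D, T d : ℤ[T;T⁻¹]) ^ n =
      ∑ f ∈ Fintype.piFinset fun _ : Fin n => D, T (∑ i, f i) := by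
    rw [← Fin.prod_const, Finset.prod_univ_sum]
    simp only [T, AddMonoidAlgebra.prod_single, Finset.prod_const_one]
  rw [hcard, hpow, AddMonoidAlgebra.coeff_sum, Finsupp.finsetSum_apply, Finset.card_filter]
  simp [T_apply]

end LaurentPolynomial

namespace PowerSeries

variable {R : Type*} [CommRing R]

/- In `R[T;T⁻¹]⟦X⟧` and `(Polynomial R)⟦X⟧` the power series variable `X` is the `t` of the
header, while `T` and the polynomial variable `Polynomial.X` are `u`. -/

noncomputable def laurentConstantTerm (f : R[T;T⁻¹]⟦X⟧) : R⟦X⟧ :=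
  mk fun n => (coeff n f).coeff 0

theorem laurentConstantTerm_add (f g : R[T;T⁻¹]⟦X⟧) :
    laurentConstantTerm (f + g) = laurentConstantTerm f + laurentConstantTerm g := by
  ext n; simp [laurentConstantTerm]

theorem laurentConstantTerm_map_C_mul (a : R⟦X⟧) (f : R[T;T⁻¹]⟦X⟧) :
    laurentConstantTerm (map LaurentPolynomial.C a * f) = a * laurentConstantTerm f := by
  ext n
  simp only [laurentConstantTerm, coeff_mk, coeff_mul, AddMonoidAlgebra.coeff_sum,
    Finsupp.finsetSum_apply, coeff_map, ← LaurentPolynomial.single_eq_C,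
    AddMonoidAlgebra.coeff_single_zero_mul]

theorem laurentConstantTerm_map_toLaurent (f : (Polynomial R)⟦X⟧) :
    laurentConstantTerm (map Polynomial.toLaurent f) = map Polynomial.constantCoeff f := by
  ext n
  simp [laurentConstantTerm, ← Polynomial.coeff_toLaurent_natCast]

theorem laurentConstantTerm_map_toLaurentInv (f : (Polynomial R)⟦X⟧) :
    laurentConstantTerm (map Polynomial.toLaurentInv f) = map Polynomial.constantCoeff f := by
  ext n
  simp [laurentConstantTerm, Polynomial.coeff_toLaurentInv_zero]

theorem laurentConstantTerm_mk_pow (φ : Polynomial R) :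
    laurentConstantTerm (mk fun n => (LaurentPolynomial.T (-1) * Polynomial.toLaurent φ) ^ n) =
      mk fun n => (φ ^ n).coeff n := by
  ext n
  rw [laurentConstantTerm, coeff_mk, coeff_mk, coeff_mk,
    LaurentPolynomial.coeff_zero_T_neg_one_mul_toLaurent_pow]

theorem map_toLaurent_map_C (a : R⟦X⟧) :
    map Polynomial.toLaurent (map Polynomial.C a) = map LaurentPolynomial.C a := by
  ext n; simp [Polynomial.toLaurent_C]

theorem map_toLaurentInv_map_C (a : R⟦X⟧) :
    map Polynomial.toLaurentInv (map Polynomial.C a) = map LaurentPolynomial.C a := by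
  ext n; simp [Polynomial.toLaurentInv_C]

theorem C_T_one_mul_C_T_neg_one :
    C (LaurentPolynomial.T 1) * C (LaurentPolynomial.T (-1)) = (1 : R[T;T⁻¹]⟦X⟧) := by
  rw [← map_mul, ← LaurentPolynomial.T_add, add_neg_cancel, LaurentPolynomial.T_zero, map_one]

theorem exists_C_eq_map_C_aeval_add (φ : Polynomial R) (y : R⟦X⟧) :
    ∃ k : (Polynomial R)⟦X⟧, C φ = map Polynomial.C (Polynomial.aeval y φ) +
      (C Polynomial.X - map Polynomial.C y) *
        (map Polynomial.C (Polynomial.aeval y (Polynomial.derivative φ)) +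
          (C Polynomial.X - map Polynomial.C y) * k) := by
  obtain ⟨k, hk⟩ := Polynomial.binomExpansion (φ.map (algebraMap R (Polynomial R)⟦X⟧))
    (map (algebraMap R (Polynomial R)) y) (C Polynomial.X - map (algebraMap R (Polynomial R)) y)
  simp only [add_sub_cancel, Polynomial.eval_map_algebraMap, Polynomial.derivative_map,
    aeval_C_X, ← map_aeval] at hk
  rw [Polynomial.algebraMap_eq] at hk
  exact ⟨k, by rw [hk]; ring⟩

theorem one_sub_C_T_neg_one_mul_toLaurent_mul_X_eq (φ : Polynomial R) {y : R⟦X⟧}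
    (hy : y = X * Polynomial.aeval y φ) {q : (Polynomial R)⟦X⟧}
    (hq : C φ = map Polynomial.C (Polynomial.aeval y φ) +
      (C Polynomial.X - map Polynomial.C y) * q) :
    1 - C (LaurentPolynomial.T (-1) * Polynomial.toLaurent φ) * X =
      map Polynomial.toLaurentInv (1 - C Polynomial.X * map Polynomial.C y) *
        map Polynomial.toLaurent (1 - X * q) := by
  have hq' := congrArg (map Polynomial.toLaurent) hq
  have hy' := congrArg (map LaurentPolynomial.C) hy
  simp only [map_add, map_sub, map_mul, map_one, map_C, map_X, map_toLaurent_map_C,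
    map_toLaurentInv_map_C, Polynomial.toLaurent_X, Polynomial.toLaurentInv_X] at hq' hy' ⊢
  linear_combination (-(C (LaurentPolynomial.T (-1)) * X)) * hq' +
    C (LaurentPolynomial.T (-1)) * hy' -
    X * map Polynomial.toLaurent q * C_T_one_mul_C_T_neg_one (R := R)

theorem map_C_one_sub_X_mul_eq (a y : R⟦X⟧) (k : (Polynomial R)⟦X⟧) :
    map LaurentPolynomial.C (1 - X * a) =
      map Polynomial.toLaurent
          (1 - X * (map Polynomial.C a + (C Polynomial.X - map Polynomial.C y) * k)) +
        X * map Polynomial.toLaurent (k * C Polynomial.X) *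
          map Polynomial.toLaurentInv (1 - C Polynomial.X * map Polynomial.C y) := by
  simp only [map_add, map_sub, map_mul, map_one, map_C, map_X, map_toLaurent_map_C,
    map_toLaurentInv_map_C, Polynomial.toLaurent_X, Polynomial.toLaurentInv_X]
  linear_combination X * map Polynomial.toLaurent k * map LaurentPolynomial.C y *
    C_T_one_mul_C_T_neg_one (R := R)

theorem mk_coeff_pow_mul_one_sub_X_mul_aeval_derivative (φ : Polynomial R) {y : R⟦X⟧}
    (hy : y = X * Polynomial.aeval y φ) :
    (mk fun n => (φ ^ n).coeff n) *
      (1 - X * Polynomial.aeval y (Polynomial.derivative φ)) = 1 := by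
  obtain ⟨k, hk⟩ := exists_C_eq_map_C_aeval_add φ y
  set q := map Polynomial.C (Polynomial.aeval y (Polynomial.derivative φ)) +
    (C Polynomial.X - map Polynomial.C y) * k
  have hy₀ : constantCoeff (map Polynomial.C y) = 0 := by
    rw [← coeff_zero_eq_constantCoeff_apply, coeff_map, hy]
    simp
  obtain ⟨V, hV⟩ :=
    (isUnit_iff_constantCoeff.mpr (by simp) : IsUnit (1 - X * q)).exists_right_inv
  obtain ⟨Z, hZ⟩ := (isUnit_iff_constantCoeff.mpr (by simp [hy₀]) :
    IsUnit (1 - C Polynomial.X * map Polynomial.C y)).exists_right_inv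
  have hW := mk_pow_mul_one_sub_C_mul_X (LaurentPolynomial.T (-1) * Polynomial.toLaurent φ)
  rw [one_sub_C_T_neg_one_mul_toLaurent_mul_X_eq φ hy hk] at hW
  have hV' := congrArg (map Polynomial.toLaurent) hV
  have hZ' := congrArg (map Polynomial.toLaurentInv) hZ
  rw [map_mul, map_one] at hV' hZ'
  set W := mk fun n => (LaurentPolynomial.T (-1) * Polynomial.toLaurent φ) ^ n
  set P := map Polynomial.toLaurent (1 - X * q)
  set N := map Polynomial.toLaurentInv (1 - C Polynomial.X * map Polynomial.C y)
  set K := X * map Polynomial.toLaurent (k * C Polynomial.X)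
  -- `W * (N * P) = 1`, so `P * W` and `N * W` are the images of the inverses `Z` and `V`.
  have hkey : map LaurentPolynomial.C (1 - X * Polynomial.aeval y (Polynomial.derivative φ)) * W =
      map Polynomial.toLaurentInv Z + map Polynomial.toLaurent (X * (k * C Polynomial.X) * V) := by
    rw [map_C_one_sub_X_mul_eq _ y k, map_mul (map Polynomial.toLaurent) (X * _) V,
      map_mul (map Polynomial.toLaurent) X, map_X]
    linear_combination (-(P * W)) * hZ' +
      (map Polynomial.toLaurentInv Z + K * map Polynomial.toLaurent V) * hW - K * N * W * hV'
  have hZ₀ : map Polynomial.constantCoeff Z = 1 := by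
    simpa using congrArg (map Polynomial.constantCoeff) hZ
  have hct := congrArg laurentConstantTerm hkey
  rw [laurentConstantTerm_map_C_mul, laurentConstantTerm_add, laurentConstantTerm_mk_pow,
    laurentConstantTerm_map_toLaurent, laurentConstantTerm_map_toLaurentInv, hZ₀] at hct
  simpa [mul_comm] using hct

end PowerSeries

open LaurentPolynomial in
theorem invert_sum_T_eq_T_neg_one_mul_toLaurent :
    invert (∑ d ∈ ({-2, -1, 0, 1} : Finset ℤ), T d : ℤ[T;T⁻¹]) =
      T (-1) * Polynomial.toLaurent (1 + Polynomial.X + Polynomial.X ^ 2 + Polynomial.X ^ 3) := by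
  rw [Finset.sum_insert (by decide), Finset.sum_insert (by decide), Finset.sum_insert (by decide),
    Finset.sum_singleton]
  simp only [map_add, invert_T, map_one, Polynomial.toLaurent_X, Polynomial.toLaurent_X_pow,
    mul_add, mul_one, ← T_add]
  norm_num
  abel

theorem bridgeGF_eq_mk_coeff_pow :
    bridgeGF = mk fun n =>
      ((1 + Polynomial.X + Polynomial.X ^ 2 + Polynomial.X ^ 3 : Polynomial ℤ) ^ n).coeff n := by
  ext n
  have hD : ({-2, -1, 0, 1} : Set ℤ) = (({-2, -1, 0, 1} : Finset ℤ) : Set ℤ) := by simp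
  rw [bridgeGF, coeff_mk, coeff_mk, hD]
  simp only [Finset.mem_coe]
  rw [natCard_lists_sum_eq_coeff_pow, ← LaurentPolynomial.coeff_zero_T_neg_one_mul_toLaurent_pow,
    ← invert_sum_T_eq_T_neg_one_mul_toLaurent, ← map_pow, LaurentPolynomial.invert_apply,
    neg_zero]

theorem bridge_minimalPolynomial :
    (16 * X ^ 3 + 8 * X ^ 2 + 11 * X - 4) * bridgeGF ^ 3
      + (3 - 2 * X) * bridgeGF + 1 = 0 := by
  obtain ⟨y, hy⟩ := exists_eq_X_mul_aeval
    (1 + Polynomial.X + Polynomial.X ^ 2 + Polynomial.X ^ 3 : Polynomial ℤ)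
  have hG : bridgeGF * (1 - X * (1 + 2 * y + 3 * y ^ 2)) = 1 := by
    rw [bridgeGF_eq_mk_coeff_pow]
    convert mk_coeff_pow_mul_one_sub_X_mul_aeval_derivative _ hy using 4
    simp only [Polynomial.derivative_one, Polynomial.derivative_X, Polynomial.derivative_X_pow_succ,
      Nat.cast_one, Int.reduceAdd, Nat.cast_ofNat, zero_add, pow_one, map_add, map_one, map_mul,
      map_pow, map_ofNat, Polynomial.aeval_X]
  replace hy : y = X * (1 + y + y ^ 2 + y ^ 3) := by simpa using hy
  set D := 1 - X * (1 + 2 * y + 3 * y ^ 2)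
  -- `D = 1 / G`; after clearing it the claim is a multiple of the kernel equation for `y`.
  have hD : 16 * X ^ 3 + 8 * X ^ 2 + 11 * X - 4 + (3 - 2 * X) * D ^ 2 + D ^ 3 = 0 := by
    linear_combination (27 * X ^ 2 * (y + y ^ 2 + y ^ 3) - 27 * X * y - 13 * X ^ 2 - 18 * X) * hy
  linear_combination bridgeGF ^ 3 * hD -
    ((3 - 2 * X) * bridgeGF * (bridgeGF * D + 1) + bridgeGF ^ 2 * D ^ 2 + bridgeGF * D + 1) * hG
end
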